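/- arXiv:1811.02909 — 4 statements merged into one kernel-verified Lean document; each statement's English description precedes it below -/
import Mathlib

section
/- Let H be a weak bialgebra over a field k, let A be a unital associative k-algebra, and let f : H⊗H → A be a k-linear map such that f(h⊗g) = Σ f(h₍₁₎⊗g₍₁₎) ε(h₍₂₎g₍₂₎) for all h,g ∈ H. Then f(h·Π^R(g) ⊗ l) = f(h ⊗ Π^R(g)·l) for all h,g,l ∈ H. -/
/-!
Common framework: weak bialgebras, weak Hopf algebras, weak measures and
unitary weak crossed products, formalized via linear maps over a field `k`.
Sweedler sums are expressed by composites of canonical linear maps.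
-/

open TensorProduct

set_option autoImplicit false
set_option maxHeartbeats 1000000

noncomputable section

namespace WeakCrossed

variable (k : Type*) [Field k]
variable (H : Type*) [Ring H] [Algebra k H] [Coalgebra k H]
variable (A : Type*) [Ring A] [Algebra k A]

/-- The comultiplication of `H`. -/
abbrev comulH : H →ₗ[k] H ⊗[k] H := Coalgebra.comul

/-- The counit of `H`. -/
abbrev counitH : H →ₗ[k] k := Coalgebra.counit

/-- The rearrangement `(M ⊗ N) ⊗ P ≃ (M ⊗ P) ⊗ N`. -/
def rightComm (M N P : Type*) [AddCommGroup M] [AddCommGroup N] [AddCommGroup P]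
    [Module k M] [Module k N] [Module k P] :
    (M ⊗[k] N) ⊗[k] P ≃ₗ[k] (M ⊗[k] P) ⊗[k] N :=
  TensorProduct.assoc k M N P ≪≫ₗ
    TensorProduct.congr (LinearEquiv.refl k M) (TensorProduct.comm k N P) ≪≫ₗ
      (TensorProduct.assoc k M P N).symm

/-- The comultiplication of the tensor product coalgebra `H ⊗ H`:
`h ⊗ g ↦ Σ (h₍₁₎ ⊗ g₍₁₎) ⊗ (h₍₂₎ ⊗ g₍₂₎)`. -/
def comul2 : H ⊗[k] H →ₗ[k] (H ⊗[k] H) ⊗[k] (H ⊗[k] H) :=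
  (TensorProduct.tensorTensorTensorComm k H H H H).toLinearMap ∘ₗ
    TensorProduct.map (comulH k H) (comulH k H)

/-- Iterated comultiplication `h ↦ Σ (h₍₁₎ ⊗ h₍₂₎) ⊗ h₍₃₎`. -/
def comul3H : H →ₗ[k] (H ⊗[k] H) ⊗[k] H :=
  LinearMap.rTensor H (comulH k H) ∘ₗ comulH k H

/-- The comultiplication of the tensor product coalgebra `(H ⊗ H) ⊗ H`. -/
def comul3 : (H ⊗[k] H) ⊗[k] H →ₗ[k]
    ((H ⊗[k] H) ⊗[k] H) ⊗[k] ((H ⊗[k] H) ⊗[k] H) :=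
  (TensorProduct.tensorTensorTensorComm k (H ⊗[k] H) (H ⊗[k] H) H H).toLinearMap ∘ₗ
    TensorProduct.map (comul2 k H) (comulH k H)

/-- The target map `Π^L(h) = Σ ε(1₍₁₎ h) 1₍₂₎`. -/
def piL : H →ₗ[k] H :=
  (TensorProduct.lid k H).toLinearMap ∘ₗ
    TensorProduct.map (counitH k H) (LinearMap.id : H →ₗ[k] H) ∘ₗ
      LinearMap.mulLeft k (comulH k H 1) ∘ₗ (TensorProduct.mk k H H).flip 1

/-- The source map `Π^R(h) = Σ 1₍₁₎ ε(h 1₍₂₎)`. -/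
def piR : H →ₗ[k] H :=
  (TensorProduct.rid k H).toLinearMap ∘ₗ
    TensorProduct.map (LinearMap.id : H →ₗ[k] H) (counitH k H) ∘ₗ
      LinearMap.mulRight k (comulH k H 1) ∘ₗ TensorProduct.mk k H H 1

/-- The axioms of a weak bialgebra:  `Δ` is multiplicative, the weak counit
axiom `ε(xyz) = Σ ε(x y₍₁₎) ε(y₍₂₎ z) = Σ ε(x y₍₂₎) ε(y₍₁₎ z)` holds, and the
weak unit axiom
`(Δ⊗id)(Δ(1)) = (Δ(1)⊗1)(1⊗Δ(1)) = (1⊗Δ(1))(Δ(1)⊗1)` holds. -/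
structure IsWeakBialgebra : Prop where
  comul_mul : ∀ x y : H, comulH k H (x * y) = comulH k H x * comulH k H y
  counit_mul : ∀ x y z : H,
    counitH k H (x * y * z) =
      (LinearMap.mul' k k ∘ₗ TensorProduct.map
        (counitH k H ∘ₗ LinearMap.mulLeft k x)
        (counitH k H ∘ₗ LinearMap.mulRight k z)) (comulH k H y)
  counit_mul_op : ∀ x y z : H,
    counitH k H (x * y * z) =
      (LinearMap.mul' k k ∘ₗ TensorProduct.map
        (counitH k H ∘ₗ LinearMap.mulLeft k x)
        (counitH k H ∘ₗ LinearMap.mulRight k z))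
        (TensorProduct.comm k H H (comulH k H y))
  comul_one_left :
    comul3H k H 1 =
      (comulH k H 1 ⊗ₜ[k] (1 : H)) *
        (TensorProduct.assoc k H H H).symm ((1 : H) ⊗ₜ[k] comulH k H 1)
  comul_one_right :
    comul3H k H 1 =
      ((TensorProduct.assoc k H H H).symm ((1 : H) ⊗ₜ[k] comulH k H 1)) *
        (comulH k H 1 ⊗ₜ[k] (1 : H))

/-- The axioms of an antipode of a weak Hopf algebra:
`Σ h₍₁₎ S(h₍₂₎) = Π^L(h)`, `Σ S(h₍₁₎) h₍₂₎ = Π^R(h)` and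
`Σ S(h₍₁₎) h₍₂₎ S(h₍₃₎) = S(h)`. -/
structure IsWeakHopf (S : H →ₗ[k] H) : Prop where
  antipode_left : ∀ h : H,
    LinearMap.mul' k H (LinearMap.lTensor H S (comulH k H h)) = piL k H h
  antipode_right : ∀ h : H,
    LinearMap.mul' k H (LinearMap.rTensor H S (comulH k H h)) = piR k H h
  antipode_mid : ∀ h : H,
    LinearMap.mul' k H
      (TensorProduct.map (LinearMap.mul' k H ∘ₗ LinearMap.rTensor H S) S
        (comul3H k H h)) = S h

variable {k H A}

/-- `h ↦ ρ(h ⊗ a)`. -/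
def rhoAt (ρ : H ⊗[k] A →ₗ[k] A) (a : A) : H →ₗ[k] A :=
  ρ ∘ₗ (TensorProduct.mk k H A).flip a

/-- `ρ` is a weak measure of `H` on `A`:
`ρ(h ⊗ ab) = Σ ρ(h₍₁₎ ⊗ a) ρ(h₍₂₎ ⊗ b)`. -/
def IsWeakMeasure (ρ : H ⊗[k] A →ₗ[k] A) : Prop :=
  ∀ (h : H) (a b : A),
    ρ (h ⊗ₜ[k] (a * b)) =
      (LinearMap.mul' k A ∘ₗ TensorProduct.map ρ ρ)
        (TensorProduct.tensorTensorTensorComm k H H A A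
          (comulH k H h ⊗ₜ[k] (a ⊗ₜ[k] b)))

/-- Convolution product on `Hom(H, B)`: `(α * β)(h) = Σ α(h₍₁₎) β(h₍₂₎)`. -/
def conv1 {B : Type*} [Ring B] [Algebra k B] (α β : H →ₗ[k] B) : H →ₗ[k] B :=
  LinearMap.mul' k B ∘ₗ TensorProduct.map α β ∘ₗ comulH k H

/-- Convolution product on `Hom(H ⊗ H, A)` with respect to the tensor product
coalgebra structure of `H ⊗ H`. -/
def conv2 (α β : H ⊗[k] H →ₗ[k] A) : H ⊗[k] H →ₗ[k] A :=
  LinearMap.mul' k A ∘ₗ TensorProduct.map α β ∘ₗ comul2 k H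

/-- `(h, g) ↦ Σ α(h₍₁₎ ⊗ g₍₁₎) ε(h₍₂₎ g₍₂₎)`. -/
def convCounitR (α : H ⊗[k] H →ₗ[k] A) : H ⊗[k] H →ₗ[k] A :=
  (TensorProduct.rid k A).toLinearMap ∘ₗ
    TensorProduct.map α (counitH k H ∘ₗ LinearMap.mul' k H) ∘ₗ comul2 k H

/-- `(h, g) ↦ Σ ε(h₍₁₎ g₍₁₎) α(h₍₂₎ ⊗ g₍₂₎)`. -/
def convCounitL (α : H ⊗[k] H →ₗ[k] A) : H ⊗[k] H →ₗ[k] A :=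
  (TensorProduct.lid k A).toLinearMap ∘ₗ
    TensorProduct.map (counitH k H ∘ₗ LinearMap.mul' k H) α ∘ₗ comul2 k H

/-- `L(φ)(a ⊗ h) = Σ a φ(h₍₁₎) ⊗ h₍₂₎`. -/
def Lmap (φ : H →ₗ[k] A) : A ⊗[k] H →ₗ[k] A ⊗[k] H :=
  LinearMap.rTensor H (LinearMap.mul' k A ∘ₗ LinearMap.lTensor A φ) ∘ₗ
    (TensorProduct.assoc k A H H).symm.toLinearMap ∘ₗ
      LinearMap.lTensor A (comulH k H)

/-- The idempotent `∇_ρ(a ⊗ h) = Σ a ρ(h₍₁₎ ⊗ 1) ⊗ h₍₂₎`. -/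
def nablaRho (ρ : H ⊗[k] A →ₗ[k] A) : A ⊗[k] H →ₗ[k] A ⊗[k] H :=
  Lmap (rhoAt ρ 1)

/-- The twisting map `χ_ρ(h ⊗ a) = Σ ρ(h₍₁₎ ⊗ a) ⊗ h₍₂₎`. -/
def chiRho (ρ : H ⊗[k] A →ₗ[k] A) : H ⊗[k] A →ₗ[k] A ⊗[k] H :=
  LinearMap.rTensor H ρ ∘ₗ (rightComm k H H A).toLinearMap ∘ₗ
    LinearMap.rTensor A (comulH k H)

/-- The preunit `ν = Σ ρ(1₍₁₎ ⊗ 1_A) ⊗ 1₍₂₎ ∈ A ⊗ H`. -/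
def nu (ρ : H ⊗[k] A →ₗ[k] A) : A ⊗[k] H :=
  chiRho ρ ((1 : H) ⊗ₜ[k] (1 : A))

/-- `F_f(h ⊗ g) = Σ f(h₍₁₎ ⊗ g₍₁₎) ⊗ h₍₂₎ g₍₂₎`. -/
def Fmap (f : H ⊗[k] H →ₗ[k] A) : H ⊗[k] H →ₗ[k] A ⊗[k] H :=
  TensorProduct.map f (LinearMap.mul' k H) ∘ₗ comul2 k H

/-- The twisted module condition:
`Σ f(h₍₁₎⊗g₍₁₎) ρ(h₍₂₎g₍₂₎⊗a) = Σ ρ(h₍₁₎ ⊗ ρ(g₍₁₎⊗a)) f(h₍₂₎⊗g₍₂₎)`. -/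
def IsTwistedModule (ρ : H ⊗[k] A →ₗ[k] A) (f : H ⊗[k] H →ₗ[k] A) : Prop :=
  ∀ a : A,
    conv2 f (rhoAt ρ a ∘ₗ LinearMap.mul' k H) =
      conv2 (ρ ∘ₗ LinearMap.lTensor H (rhoAt ρ a)) f

/-- The cocycle condition:
`Σ f(h₍₁₎⊗g₍₁₎) f(h₍₂₎g₍₂₎⊗l) = Σ ρ(h₍₁₎ ⊗ f(g₍₁₎⊗l₍₁₎)) f(h₍₂₎ ⊗ g₍₂₎l₍₂₎)`. -/
def IsCocycle (ρ : H ⊗[k] A →ₗ[k] A) (f : H ⊗[k] H →ₗ[k] A) : Prop :=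
  LinearMap.mul' k A ∘ₗ
      TensorProduct.map f (f ∘ₗ LinearMap.rTensor H (LinearMap.mul' k H)) ∘ₗ
        (TensorProduct.assoc k (H ⊗[k] H) (H ⊗[k] H) H).toLinearMap ∘ₗ
          LinearMap.rTensor H (comul2 k H) =
    LinearMap.mul' k A ∘ₗ
      TensorProduct.map
        (ρ ∘ₗ LinearMap.lTensor H f ∘ₗ (TensorProduct.assoc k H H H).toLinearMap)
        (f ∘ₗ LinearMap.lTensor H (LinearMap.mul' k H) ∘ₗ
          (TensorProduct.assoc k H H H).toLinearMap) ∘ₗ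
        comul3 k H

/-- The data `(ρ, f)` of a unitary weak crossed product, i.e. conditions
(i)–(v) of the paper: `ρ` is a weak measure, `f` is normalized
(`f(h⊗g) = Σ f(h₍₁₎⊗g₍₁₎) ρ(h₍₂₎g₍₂₎⊗1)`), `f` is a cocycle satisfying the
twisted module condition, and the preunit conditions for
`ν = Σ ρ(1₍₁₎⊗1)⊗1₍₂₎` hold. -/
structure IsCrossedProdData (ρ : H ⊗[k] A →ₗ[k] A) (f : H ⊗[k] H →ₗ[k] A) : Prop where
  measure : IsWeakMeasure ρ
  normal : f = conv2 f (rhoAt ρ 1 ∘ₗ LinearMap.mul' k H)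
  twisted : IsTwistedModule ρ f
  cocycle : IsCocycle ρ f
  preunit_left : ∀ h : H,
    rhoAt ρ 1 h =
      (LinearMap.mul' k A ∘ₗ TensorProduct.map ρ f)
        (TensorProduct.tensorTensorTensorComm k H H A H
          (comulH k H h ⊗ₜ[k] nu ρ))
  preunit_right : ∀ h : H,
    rhoAt ρ 1 h =
      (LinearMap.mul' k A ∘ₗ
        LinearMap.lTensor A (f ∘ₗ (TensorProduct.mk k H H).flip h)) (nu ρ)
  preunit_mid : ∀ a : A,
    Lmap (rhoAt ρ a) (nu ρ) =
      LinearMap.rTensor H (LinearMap.mulLeft k a) (nu ρ)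

/-- `E = A ×_ρ^f H`, the image of the idempotent `∇_ρ`. -/
abbrev CrossE (ρ : H ⊗[k] A →ₗ[k] A) : Submodule k (A ⊗[k] H) :=
  LinearMap.range (nablaRho ρ)

/-- The inclusion `ι : E → A ⊗ H`. -/
def iotaE (ρ : H ⊗[k] A →ₗ[k] A) : CrossE ρ →ₗ[k] A ⊗[k] H :=
  (CrossE ρ).subtype

/-- The projection `p : A ⊗ H → E`, the corestriction of `∇_ρ`. -/
def pE (ρ : H ⊗[k] A →ₗ[k] A) : A ⊗[k] H →ₗ[k] CrossE ρ :=
  (nablaRho ρ).rangeRestrict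

/-- The product `μ♯((a⊗h)⊗(b⊗g)) = Σ a ρ(h₍₁₎⊗b) f(h₍₂₎⊗g₍₁₎) ⊗ h₍₃₎g₍₂₎`. -/
def muSharp (ρ : H ⊗[k] A →ₗ[k] A) (f : H ⊗[k] H →ₗ[k] A) :
    (A ⊗[k] H) ⊗[k] (A ⊗[k] H) →ₗ[k] A ⊗[k] H :=
  LinearMap.rTensor H (LinearMap.mul' k A) ∘ₗ
  (TensorProduct.assoc k A A H).symm.toLinearMap ∘ₗ
  LinearMap.lTensor A
    (LinearMap.rTensor H (LinearMap.mul' k A) ∘ₗ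
     (TensorProduct.assoc k A A H).symm.toLinearMap ∘ₗ
     LinearMap.lTensor A (Fmap f) ∘ₗ
     (TensorProduct.assoc k A H H).toLinearMap ∘ₗ
     LinearMap.rTensor H (chiRho ρ) ∘ₗ
     (TensorProduct.assoc k H A H).symm.toLinearMap) ∘ₗ
  (TensorProduct.assoc k A H (A ⊗[k] H)).toLinearMap

/-- The product of the unitary crossed product `E = A ×_ρ^f H`. -/
def crossMul (ρ : H ⊗[k] A →ₗ[k] A) (f : H ⊗[k] H →ₗ[k] A) (x y : CrossE ρ) :
    CrossE ρ :=
  pE ρ (muSharp ρ f (iotaE ρ x ⊗ₜ[k] iotaE ρ y))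

/-- The product of the crossed product as a linear map. -/
def mulE (ρ : H ⊗[k] A →ₗ[k] A) (f : H ⊗[k] H →ₗ[k] A) :
    CrossE ρ ⊗[k] CrossE ρ →ₗ[k] CrossE ρ :=
  pE ρ ∘ₗ muSharp ρ f ∘ₗ TensorProduct.map (iotaE ρ) (iotaE ρ)

/-- The unit `1_E = p(ν)` of the crossed product. -/
def crossOne (ρ : H ⊗[k] A →ₗ[k] A) : CrossE ρ := pE ρ (nu ρ)

/-- `γ(h) = p(1_A ⊗ h)`. -/
def gammaE (ρ : H ⊗[k] A →ₗ[k] A) : H →ₗ[k] CrossE ρ :=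
  pE ρ ∘ₗ TensorProduct.mk k A H 1

/-- `a ↦ Σ a ν_A ⊗ ν_H`. -/
def jnuAux (ρ : H ⊗[k] A →ₗ[k] A) : A →ₗ[k] A ⊗[k] H :=
  LinearMap.rTensor H (LinearMap.mul' k A) ∘ₗ
    (TensorProduct.assoc k A A H).symm.toLinearMap ∘ₗ
      (TensorProduct.mk k A (A ⊗[k] H)).flip (nu ρ)

/-- `j_ν(a) = p(Σ a ν_A ⊗ ν_H)`. -/
def jnuE (ρ : H ⊗[k] A →ₗ[k] A) : A →ₗ[k] CrossE ρ := pE ρ ∘ₗ jnuAux ρ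

/-- The left action `a ▸ (b ⊗ h) = ab ⊗ h` of `A` on `A ⊗ H`. -/
def aAct (a : A) : A ⊗[k] H →ₗ[k] A ⊗[k] H :=
  LinearMap.rTensor H (LinearMap.mulLeft k a)

/-- The comodule structure `δ_E = (p ⊗ id) ∘ (id ⊗ Δ) ∘ ι` of the crossed
product. -/
def deltaE (ρ : H ⊗[k] A →ₗ[k] A) : CrossE ρ →ₗ[k] CrossE ρ ⊗[k] H :=
  LinearMap.rTensor H (pE ρ) ∘ₗ
    (TensorProduct.assoc k A H H).symm.toLinearMap ∘ₗ
      LinearMap.lTensor A (comulH k H) ∘ₗ iotaE ρ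

/-- The componentwise product `(x⊗h)(y⊗g) = x·y ⊗ hg` on `E ⊗ H`. -/
def mulEH (ρ : H ⊗[k] A →ₗ[k] A) (f : H ⊗[k] H →ₗ[k] A) :
    (CrossE ρ ⊗[k] H) ⊗[k] (CrossE ρ ⊗[k] H) →ₗ[k] CrossE ρ ⊗[k] H :=
  TensorProduct.map (mulE ρ f) (LinearMap.mul' k H) ∘ₗ
    (TensorProduct.tensorTensorTensorComm k (CrossE ρ) H (CrossE ρ) H).toLinearMap

/-- Convolution on `Hom(H, E)` using the crossed product multiplication. -/
def convE (ρ : H ⊗[k] A →ₗ[k] A) (f : H ⊗[k] H →ₗ[k] A)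
    (α β : H →ₗ[k] CrossE ρ) : H →ₗ[k] CrossE ρ :=
  mulE ρ f ∘ₗ TensorProduct.map α β ∘ₗ comulH k H

/-- `γ⁻¹(h) = Σ j_ν(f⁻¹(S(h₍₁₎)₍₁₎ ⊗ h₍₂₎)) · γ(S(h₍₁₎)₍₂₎)`. -/
def gammaInv (ρ : H ⊗[k] A →ₗ[k] A) (f : H ⊗[k] H →ₗ[k] A)
    (S : H →ₗ[k] H) (fi : H ⊗[k] H →ₗ[k] A) : H →ₗ[k] CrossE ρ :=
  mulE ρ f ∘ₗ
    TensorProduct.map (jnuE ρ ∘ₗ fi) (gammaE ρ) ∘ₗ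
      (rightComm k H H H).toLinearMap ∘ₗ
        LinearMap.rTensor H (comulH k H) ∘ₗ
          LinearMap.rTensor H S ∘ₗ comulH k H

/-- `(id ⊗ ε) : A ⊗ H → A`. -/
def epsA : A ⊗[k] H →ₗ[k] A :=
  (TensorProduct.rid k A).toLinearMap ∘ₗ LinearMap.lTensor A (counitH k H)

/-- Right `H`-comodule algebra structure on a unital algebra `B`. -/
structure IsComodAlg {B : Type*} [Ring B] [Algebra k B]
    (δB : B →ₗ[k] B ⊗[k] H) : Prop where
  counit : ∀ b : B,
    (TensorProduct.rid k B) (LinearMap.lTensor B (counitH k H) (δB b)) = b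
  coassoc : (TensorProduct.assoc k B H H).toLinearMap ∘ₗ
      LinearMap.rTensor H δB ∘ₗ δB = LinearMap.lTensor B (comulH k H) ∘ₗ δB
  mul_compat : ∀ x y : B, δB (x * y) = δB x * δB y
  one_compat : LinearMap.lTensor B (piL k H) (δB 1) = δB 1

/-- `(B, j)` is an `H`-cleft extension of `A`, with cleaving map `γ` and
convolution inverse `γi`. -/
structure IsCleft {B : Type*} [Ring B] [Algebra k B]
    (δB : B →ₗ[k] B ⊗[k] H) (j : A →ₗ[k] B) (γ γi : H →ₗ[k] B) : Prop where
  comodAlg : IsComodAlg δB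
  j_mul : ∀ a b : A, j (a * b) = j a * j b
  j_one : j 1 = 1
  j_inj : Function.Injective j
  j_equalizes : ∀ a : A,
    LinearMap.lTensor B (piL k H) (δB (j a)) = δB (j a)
  j_equalizer : ∀ (X : Type*) [AddCommGroup X] [Module k X] (g : X →ₗ[k] B),
    (∀ x : X, LinearMap.lTensor B (piL k H) (δB (g x)) = δB (g x)) →
      ∃! g' : X →ₗ[k] A, j ∘ₗ g' = g
  colinear : ∀ h : H, δB (γ h) = LinearMap.rTensor H γ (comulH k H h)
  total : γ 1 = 1
  inv_left : conv1 γi γ = γ ∘ₗ piR k H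
  inv_right : conv1 γ γi = γ ∘ₗ piL k H
  inv_norm : conv1 (γ ∘ₗ piR k H) γi = γi
  factors : ∃ t : H →ₗ[k] A, γ ∘ₗ piL k H = j ∘ₗ t

/-- `q(x) = Σ x₍₀₎ γ⁻¹(x₍₁₎)`. -/
def qMap {B : Type*} [Ring B] [Algebra k B]
    (δB : B →ₗ[k] B ⊗[k] H) (γi : H →ₗ[k] B) : B →ₗ[k] B :=
  LinearMap.mul' k B ∘ₗ LinearMap.lTensor B γi ∘ₗ δB

/-- `ρ(h ⊗ a) = p(γ(h) j(a))`. -/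
def cleftRho {B : Type*} [Ring B] [Algebra k B]
    (γ : H →ₗ[k] B) (j : A →ₗ[k] B) (p : B →ₗ[k] A) : H ⊗[k] A →ₗ[k] A :=
  p ∘ₗ LinearMap.mul' k B ∘ₗ TensorProduct.map γ j

/-- `f(h ⊗ g) = p(γ(h) γ(g))`. -/
def cleftF {B : Type*} [Ring B] [Algebra k B]
    (γ : H →ₗ[k] B) (p : B →ₗ[k] A) : H ⊗[k] H →ₗ[k] A :=
  p ∘ₗ LinearMap.mul' k B ∘ₗ TensorProduct.map γ γ

/-- `w(a ⊗ h) = j(a) γ(h)`. -/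
def wMap {B : Type*} [Ring B] [Algebra k B]
    (j : A →ₗ[k] B) (γ : H →ₗ[k] B) : A ⊗[k] H →ₗ[k] B :=
  LinearMap.mul' k B ∘ₗ TensorProduct.map j γ

end WeakCrossed

/-!
An element `y = Π^R(g)` of the source subalgebra satisfies
`Δ(y) = Δ(1)(1 ⊗ y) = (1 ⊗ y)Δ(1)`; these are the two halves of the weak unit axiom.
Hence `Δ(h y) = Δ(h)(1 ⊗ y)` and `Δ(y l) = (1 ⊗ y)Δ(l)`. The normalization of `f` writes
`f(x ⊗ l) = Σ f(x₍₁₎ ⊗ l₍₁₎) ε(x₍₂₎ l₍₂₎)`, in which the factor `y` can be moved across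
the product `x₍₂₎ l₍₂₎` from `Δ(h y)` to `Δ(y l)`.
-/

namespace WeakCrossed

open LinearMap

section Algebra

variable {k : Type*} [CommSemiring k] {H : Type*} [Semiring H] [Algebra k H]

theorem rid_lTensor_tmul_one_mul_assoc_symm (ψ : H →ₗ[k] k) (x t : H ⊗[k] H) :
    TensorProduct.rid k (H ⊗[k] H) (lTensor (H ⊗[k] H) ψ
      ((x ⊗ₜ[k] (1 : H)) * (TensorProduct.assoc k H H H).symm ((1 : H) ⊗ₜ[k] t))) =
    x * ((1 : H) ⊗ₜ[k] TensorProduct.rid k H (lTensor H ψ t)) := by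
  induction x using TensorProduct.induction_on with
  | zero => simp
  | add x x' hx hx' => simp only [add_tmul, add_mul, map_add, hx, hx']
  | tmul a b =>
    induction t using TensorProduct.induction_on with
    | zero => simp
    | add t t' ht ht' => simp only [tmul_add, map_add, mul_add, ht, ht']
    | tmul c d => simp [Algebra.TensorProduct.tmul_mul_tmul, tmul_smul]

theorem rid_lTensor_assoc_symm_mul_tmul_one (ψ : H →ₗ[k] k) (x t : H ⊗[k] H) :
    TensorProduct.rid k (H ⊗[k] H) (lTensor (H ⊗[k] H) ψ
      ((TensorProduct.assoc k H H H).symm ((1 : H) ⊗ₜ[k] t) * (x ⊗ₜ[k] (1 : H)))) =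
    ((1 : H) ⊗ₜ[k] TensorProduct.rid k H (lTensor H ψ t)) * x := by
  induction x using TensorProduct.induction_on with
  | zero => simp
  | add x x' hx hx' => simp only [add_tmul, mul_add, map_add, hx, hx']
  | tmul a b =>
    induction t using TensorProduct.induction_on with
    | zero => simp
    | add t t' ht ht' => simp only [tmul_add, map_add, add_mul, ht, ht']
    | tmul c d => simp [Algebra.TensorProduct.tmul_mul_tmul, tmul_smul]

theorem map_mul'_tensorTensorTensorComm_mul_one_tmul {M N : Type*}
    [AddCommMonoid M] [Module k M] [AddCommMonoid N] [Module k N]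
    (α : H ⊗[k] H →ₗ[k] M) (β : H →ₗ[k] N) (u v : H ⊗[k] H) (z : H) :
    TensorProduct.map α (β ∘ₗ mul' k H)
        (TensorProduct.tensorTensorTensorComm k H H H H ((u * ((1 : H) ⊗ₜ[k] z)) ⊗ₜ[k] v)) =
      TensorProduct.map α (β ∘ₗ mul' k H)
        (TensorProduct.tensorTensorTensorComm k H H H H (u ⊗ₜ[k] (((1 : H) ⊗ₜ[k] z) * v))) := by
  induction u using TensorProduct.induction_on with
  | zero => simp
  | add u u' hu hu' => simp only [add_mul, add_tmul, map_add, hu, hu']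
  | tmul a b =>
    induction v using TensorProduct.induction_on with
    | zero => simp
    | add v v' hv hv' => simp only [mul_add, tmul_add, map_add, hv, hv']
    | tmul c d => simp [Algebra.TensorProduct.tmul_mul_tmul, mul_assoc]

end Algebra

section Coalgebra

variable {k : Type*} [Field k] {H : Type*} [Ring H] [Algebra k H] [Coalgebra k H]

theorem piR_apply (g : H) :
    piR k H g = TensorProduct.rid k H (lTensor H (counitH k H ∘ₗ mulLeft k g) (comulH k H 1)) := by
  simp only [piR, LinearMap.comp_apply, TensorProduct.mk_apply, mulRight_apply,
    LinearEquiv.coe_coe]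
  induction comulH k H 1 using TensorProduct.induction_on with
  | zero => simp
  | add t t' ht ht' => simp only [mul_add, map_add, ht, ht']
  | tmul c d => simp [Algebra.TensorProduct.tmul_mul_tmul]

theorem comul_rid_lTensor (ψ : H →ₗ[k] k) (t : H ⊗[k] H) :
    comulH k H (TensorProduct.rid k H (lTensor H ψ t)) =
      TensorProduct.rid k (H ⊗[k] H) (lTensor (H ⊗[k] H) ψ (rTensor H (comulH k H) t)) := by
  induction t using TensorProduct.induction_on with
  | zero => simp
  | add t t' ht ht' => simp only [map_add, ht, ht']
  | tmul c d => simp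

namespace IsWeakBialgebra

theorem comul_piR_eq_comul_one_mul (hWB : IsWeakBialgebra k H) (g : H) :
    comulH k H (piR k H g) = comulH k H 1 * ((1 : H) ⊗ₜ[k] piR k H g) := by
  rw [piR_apply, comul_rid_lTensor, show rTensor H (comulH k H) (comulH k H 1) = comul3H k H 1
    from rfl, hWB.comul_one_left, rid_lTensor_tmul_one_mul_assoc_symm]

theorem comul_piR_eq_mul_comul_one (hWB : IsWeakBialgebra k H) (g : H) :
    comulH k H (piR k H g) = ((1 : H) ⊗ₜ[k] piR k H g) * comulH k H 1 := by
  rw [piR_apply, comul_rid_lTensor, show rTensor H (comulH k H) (comulH k H 1) = comul3H k H 1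
    from rfl, hWB.comul_one_right, rid_lTensor_assoc_symm_mul_tmul_one]

theorem comul_mul_piR (hWB : IsWeakBialgebra k H) (h g : H) :
    comulH k H (h * piR k H g) = comulH k H h * ((1 : H) ⊗ₜ[k] piR k H g) := by
  rw [hWB.comul_mul, hWB.comul_piR_eq_comul_one_mul, ← mul_assoc, ← hWB.comul_mul, mul_one]

theorem comul_piR_mul (hWB : IsWeakBialgebra k H) (g l : H) :
    comulH k H (piR k H g * l) = ((1 : H) ⊗ₜ[k] piR k H g) * comulH k H l := by
  rw [hWB.comul_mul, hWB.comul_piR_eq_mul_comul_one, mul_assoc, ← hWB.comul_mul, one_mul]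

end IsWeakBialgebra

theorem convCounitR_tmul {A : Type*} [Ring A] [Algebra k A] (α : H ⊗[k] H →ₗ[k] A) (x y : H) :
    convCounitR α (x ⊗ₜ[k] y) =
      TensorProduct.rid k A (TensorProduct.map α (counitH k H ∘ₗ mul' k H)
        (TensorProduct.tensorTensorTensorComm k H H H H (comulH k H x ⊗ₜ[k] comulH k H y))) :=
  rfl

end Coalgebra

/-- If `f : H ⊗ H → A` satisfies
`f(h⊗g) = Σ f(h₍₁₎⊗g₍₁₎) ε(h₍₂₎g₍₂₎)`, then
`f(h Π^R(g) ⊗ l) = f(h ⊗ Π^R(g) l)` for all `h g l`. -/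
theorem statement_0 {k : Type*} [Field k]
    {H : Type*} [Ring H] [Algebra k H] [Coalgebra k H]
    {A : Type*} [Ring A] [Algebra k A]
    (hWB : IsWeakBialgebra k H)
    (f : H ⊗[k] H →ₗ[k] A)
    (hf : f = convCounitR f) :
    ∀ h g l : H,
      f ((h * piR k H g) ⊗ₜ[k] l) = f (h ⊗ₜ[k] (piR k H g * l)) := by
  intro h g l
  rw [hf, convCounitR_tmul, convCounitR_tmul, hWB.comul_mul_piR, hWB.comul_piR_mul,
    map_mul'_tensorTensorTensorComm_mul_one_tmul]

end WeakCrossed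
end
end

section
/- Let H be a weak bialgebra over a field k, let A be a unital associative k-algebra, and let f : H⊗H → A be a k-linear map such that Σ ε(h₍₁₎g₍₁₎) f(h₍₂₎⊗g₍₂₎) = f(h⊗g) for all h,g ∈ H. Then f(h·Π^L(g) ⊗ l) = f(h ⊗ Π^L(g)·l) for all h,g,l ∈ H. -/
/-!
Common framework: weak bialgebras, weak Hopf algebras, weak measures and
unitary weak crossed products, formalized via linear maps over a field `k`.
Sweedler sums are expressed by composites of canonical linear maps.
-/

open TensorProduct

set_option autoImplicit false
set_option maxHeartbeats 1000000

noncomputable section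

namespace WeakCrossed

set_option synthInstance.maxHeartbeats 400000

section Aux

variable (k : Type*) [Field k]
variable (H : Type*) [Ring H] [Algebra k H] [Coalgebra k H]
variable (A : Type*) [Ring A] [Algebra k A]

/-- `a ↦ ε(a g)`. -/
private def epsR (g : H) : H →ₗ[k] k :=
  counitH k H ∘ₗ LinearMap.mulRight k g

/-- `a ⊗ b ↦ ε(a g) b`. -/
private def Qmap (g : H) : H ⊗[k] H →ₗ[k] H :=
  (TensorProduct.lid k H).toLinearMap ∘ₗ
    TensorProduct.map (epsR k H g) (LinearMap.id : H →ₗ[k] H)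

/-- `(a ⊗ b) ⊗ c ↦ ε(a g) (b ⊗ c)`. -/
private def Phimap (g : H) : (H ⊗[k] H) ⊗[k] H →ₗ[k] H ⊗[k] H :=
  (TensorProduct.lid k (H ⊗[k] H)).toLinearMap ∘ₗ
    TensorProduct.map (epsR k H g) (LinearMap.id : H ⊗[k] H →ₗ[k] H ⊗[k] H) ∘ₗ
      (TensorProduct.assoc k H H H).toLinearMap

variable {k H}

private lemma Qmap_comul_one (g : H) : Qmap k H g (comulH k H 1) = piL k H g := by
  have key : ∀ t : H ⊗[k] H,
      Qmap k H g t =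
        (TensorProduct.lid k H).toLinearMap
          (TensorProduct.map (counitH k H) (LinearMap.id : H →ₗ[k] H)
            (t * (g ⊗ₜ[k] (1 : H)))) := by
    intro t
    induction t using TensorProduct.induction_on with
    | zero => simp only [map_zero, zero_mul]
    | tmul a b =>
        simp [Qmap, epsR, Algebra.TensorProduct.tmul_mul_tmul]
    | add x y hx hy =>
        simp only [map_add, add_mul, hx, hy]
  rw [key]
  rfl

private lemma Phimap_comul3_one (g : H) :
    Phimap k H g (comul3H k H 1) = comulH k H (piL k H g) := by
  rw [← Qmap_comul_one g]
  have h1 : Phimap k H g (comul3H k H 1) =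
      ((TensorProduct.lid k (H ⊗[k] H)).toLinearMap ∘ₗ
        TensorProduct.map (epsR k H g) (LinearMap.id : H ⊗[k] H →ₗ[k] H ⊗[k] H))
        (LinearMap.lTensor H (comulH k H) (comulH k H 1)) := by
    simp only [Phimap, comul3H, LinearMap.comp_apply, LinearEquiv.coe_coe]
    rw [Coalgebra.coassoc_apply]
  rw [h1]
  generalize comulH k H (1 : H) = t
  induction t using TensorProduct.induction_on with
  | zero => simp only [map_zero]
  | tmul a b =>
      simp [Qmap, epsR, TensorProduct.smul_tmul']
  | add x y hx hy =>
      simp only [map_add, hx, hy]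

private lemma Phimap_mul_left (g : H) (s t : H ⊗[k] H) :
    Phimap k H g
      ((s ⊗ₜ[k] (1 : H)) *
        (TensorProduct.assoc k H H H).symm ((1 : H) ⊗ₜ[k] t)) =
      (Qmap k H g s ⊗ₜ[k] (1 : H)) * t := by
  induction s using TensorProduct.induction_on with
  | zero =>
      simp only [map_zero, TensorProduct.zero_tmul, zero_mul, mul_zero]
  | tmul a b =>
      induction t using TensorProduct.induction_on with
      | zero =>
          simp only [TensorProduct.tmul_zero, map_zero, mul_zero, zero_mul]
      | tmul c d =>
          simp [Phimap, Qmap, epsR, Algebra.TensorProduct.tmul_mul_tmul,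
            TensorProduct.smul_tmul', smul_mul_assoc]
      | add x y hx hy =>
          simp only [map_add, TensorProduct.tmul_add, mul_add, hx, hy]
  | add x y hx hy =>
      simp only [map_add, TensorProduct.add_tmul, add_mul, hx, hy]

private lemma Phimap_mul_right (g : H) (s t : H ⊗[k] H) :
    Phimap k H g
      ((TensorProduct.assoc k H H H).symm ((1 : H) ⊗ₜ[k] t) *
        (s ⊗ₜ[k] (1 : H))) =
      t * (Qmap k H g s ⊗ₜ[k] (1 : H)) := by
  induction s using TensorProduct.induction_on with
  | zero =>
      simp only [map_zero, TensorProduct.zero_tmul, zero_mul, mul_zero]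
  | tmul a b =>
      induction t using TensorProduct.induction_on with
      | zero =>
          simp only [TensorProduct.tmul_zero, map_zero, mul_zero, zero_mul]
      | tmul c d =>
          simp [Phimap, Qmap, epsR, Algebra.TensorProduct.tmul_mul_tmul,
            TensorProduct.smul_tmul', mul_smul_comm]
      | add x y hx hy =>
          simp only [map_add, TensorProduct.tmul_add, add_mul, mul_add, hx, hy]
  | add x y hx hy =>
      simp only [map_add, TensorProduct.add_tmul, add_mul, mul_add, hx, hy]

/-- `Δ(Π^L(g)) = (Π^L(g) ⊗ 1) Δ(1)`. -/
private lemma comul_piL_left (hWB : IsWeakBialgebra k H) (g : H) :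
    comulH k H (piL k H g) =
      (piL k H g ⊗ₜ[k] (1 : H)) * comulH k H 1 := by
  rw [← Phimap_comul3_one g, hWB.comul_one_left, Phimap_mul_left,
    Qmap_comul_one]

/-- `Δ(Π^L(g)) = Δ(1) (Π^L(g) ⊗ 1)`. -/
private lemma comul_piL_right (hWB : IsWeakBialgebra k H) (g : H) :
    comulH k H (piL k H g) =
      comulH k H 1 * (piL k H g ⊗ₜ[k] (1 : H)) := by
  rw [← Phimap_comul3_one g, hWB.comul_one_right, Phimap_mul_right,
    Qmap_comul_one]

private lemma comul_mul_piL (hWB : IsWeakBialgebra k H) (h g : H) :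
    comulH k H (h * piL k H g) =
      comulH k H h * (piL k H g ⊗ₜ[k] (1 : H)) := by
  rw [hWB.comul_mul, comul_piL_right hWB, ← mul_assoc, ← hWB.comul_mul,
    mul_one]

private lemma comul_piL_mul (hWB : IsWeakBialgebra k H) (g l : H) :
    comulH k H (piL k H g * l) =
      (piL k H g ⊗ₜ[k] (1 : H)) * comulH k H l := by
  rw [hWB.comul_mul, comul_piL_left hWB, mul_assoc, ← hWB.comul_mul, one_mul]

variable {A}

/-- `(x₁ ⊗ x₂) ⊗ (y₁ ⊗ y₂) ↦ ε(x₁ y₁) f(x₂ ⊗ y₂)`. -/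
private def Gmap (f : H ⊗[k] H →ₗ[k] A) :
    (H ⊗[k] H) ⊗[k] (H ⊗[k] H) →ₗ[k] A :=
  (TensorProduct.lid k A).toLinearMap ∘ₗ
    TensorProduct.map (counitH k H ∘ₗ LinearMap.mul' k H) f ∘ₗ
      (TensorProduct.tensorTensorTensorComm k H H H H).toLinearMap

private lemma Gmap_apply (f : H ⊗[k] H →ₗ[k] A) (hf : convCounitL f = f)
    (x y : H) :
    f (x ⊗ₜ[k] y) = Gmap f (comulH k H x ⊗ₜ[k] comulH k H y) := by
  conv_lhs => rw [← hf]
  simp only [convCounitL, comul2, Gmap, LinearMap.comp_apply,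
    LinearEquiv.coe_coe, TensorProduct.map_tmul]

private lemma Gmap_assoc (f : H ⊗[k] H →ₗ[k] A) (u : H) (T S : H ⊗[k] H) :
    Gmap f ((T * (u ⊗ₜ[k] (1 : H))) ⊗ₜ[k] S) =
      Gmap f (T ⊗ₜ[k] ((u ⊗ₜ[k] (1 : H)) * S)) := by
  induction T using TensorProduct.induction_on with
  | zero => simp
  | tmul a b =>
      induction S using TensorProduct.induction_on with
      | zero => simp
      | tmul c d =>
          simp [Gmap, Algebra.TensorProduct.tmul_mul_tmul, mul_assoc]
      | add x y hx hy =>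
          simp only [TensorProduct.tmul_add, mul_add, map_add, hx, hy]
  | add x y hx hy =>
      simp only [TensorProduct.add_tmul, add_mul, map_add, hx, hy]

end Aux

/-- If `f : H ⊗ H → A` satisfies
`Σ ε(h₍₁₎g₍₁₎) f(h₍₂₎⊗g₍₂₎) = f(h⊗g)`, then
`f(h Π^L(g) ⊗ l) = f(h ⊗ Π^L(g) l)` for all `h g l`. -/
theorem statement_1 {k : Type*} [Field k]
    {H : Type*} [Ring H] [Algebra k H] [Coalgebra k H]
    {A : Type*} [Ring A] [Algebra k A]
    (hWB : IsWeakBialgebra k H)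
    (f : H ⊗[k] H →ₗ[k] A)
    (hf : convCounitL f = f) :
    ∀ h g l : H,
      f ((h * piL k H g) ⊗ₜ[k] l) = f (h ⊗ₜ[k] (piL k H g * l)) := by
  intro h g l
  rw [Gmap_apply f hf, Gmap_apply f hf, comul_mul_piL hWB,
    comul_piL_mul hWB, Gmap_assoc]

end WeakCrossed
end
end

section
/- Let H be a weak bialgebra over a field k, A a unital associative k-algebra, ρ a weak measure of H on A, and f : H⊗H → A a k-linear map. The following are equivalent: (1) f(h⊗g) = Σ f(h₍₁₎⊗g₍₁₎) ε(h₍₂₎g₍₂₎) for all h,g ∈ H, and ∇_ρ∘F_f = F_f; (2) f(h⊗g) = Σ f(h₍₁₎⊗g₍₁₎) ρ(h₍₂₎g₍₂₎⊗1_A) for all h,g ∈ H. -/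
/-!
Common framework: weak bialgebras, weak Hopf algebras, weak measures and
unitary weak crossed products, formalized via linear maps over a field `k`.
Sweedler sums are expressed by composites of canonical linear maps.
-/

open TensorProduct

set_option autoImplicit false
set_option maxHeartbeats 1000000

noncomputable section

namespace WeakCrossed

section StatementTwoAux

variable {k : Type*} [Field k]
variable {H : Type*} [Ring H] [Algebra k H] [Coalgebra k H]
variable {A : Type*} [Ring A] [Algebra k A]

open LinearMap

set_option linter.unusedSectionVars false

private lemma mulK_eq :
    LinearMap.mul' k (H ⊗[k] H) =
      TensorProduct.map (LinearMap.mul' k H) (LinearMap.mul' k H) ∘ₗ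
        (TensorProduct.tensorTensorTensorComm k H H H H).toLinearMap := by
  apply TensorProduct.ext_fourfold'
  intro a b x y
  simp [Algebra.TensorProduct.tmul_mul_tmul]

private lemma comul_comp_mul (hWB : IsWeakBialgebra k H) :
    comulH k H ∘ₗ LinearMap.mul' k H =
      TensorProduct.map (LinearMap.mul' k H) (LinearMap.mul' k H) ∘ₗ comul2 k H := by
  apply TensorProduct.ext'
  intro x y
  have h := hWB.comul_mul x y
  simp only [LinearMap.comp_apply, LinearMap.mul'_apply, comul2, LinearEquiv.coe_coe,
    TensorProduct.map_tmul]
  rw [h, ← LinearMap.mul'_apply (R := k) (A := H ⊗[k] H), mulK_eq]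
  rfl

/-- `T3 : (H⊗(H⊗H))⊗(H⊗(H⊗H)) → (H⊗H)⊗((H⊗H)⊗(H⊗H))`. -/
private noncomputable def T3 (k H : Type*) [Field k] [Ring H] [Algebra k H] :
    (H ⊗[k] (H ⊗[k] H)) ⊗[k] (H ⊗[k] (H ⊗[k] H)) →ₗ[k]
      (H ⊗[k] H) ⊗[k] ((H ⊗[k] H) ⊗[k] (H ⊗[k] H)) :=
  LinearMap.lTensor (H ⊗[k] H)
      (TensorProduct.tensorTensorTensorComm k H H H H).toLinearMap ∘ₗ
    (TensorProduct.tensorTensorTensorComm k H (H ⊗[k] H) H (H ⊗[k] H)).toLinearMap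

/-- `S3 : ((H⊗H)⊗H)⊗((H⊗H)⊗H) → ((H⊗H)⊗(H⊗H))⊗(H⊗H)`. -/
private noncomputable def S3 (k H : Type*) [Field k] [Ring H] [Algebra k H] :
    ((H ⊗[k] H) ⊗[k] H) ⊗[k] ((H ⊗[k] H) ⊗[k] H) →ₗ[k]
      ((H ⊗[k] H) ⊗[k] (H ⊗[k] H)) ⊗[k] (H ⊗[k] H) :=
  LinearMap.rTensor (H ⊗[k] H)
      (TensorProduct.tensorTensorTensorComm k H H H H).toLinearMap ∘ₗ
    (TensorProduct.tensorTensorTensorComm k (H ⊗[k] H) H (H ⊗[k] H) H).toLinearMap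

private lemma lT_comul2_comp_ttt :
    LinearMap.lTensor (H ⊗[k] H) (comul2 k H) ∘ₗ
        (TensorProduct.tensorTensorTensorComm k H H H H).toLinearMap =
      T3 k H ∘ₗ TensorProduct.map
        (LinearMap.lTensor H (comulH k H)) (LinearMap.lTensor H (comulH k H)) := by
  apply TensorProduct.ext_fourfold'
  intro a b x y
  simp [T3, comul2]

private lemma rT_comul2_comp_ttt :
    LinearMap.rTensor (H ⊗[k] H) (comul2 k H) ∘ₗ
        (TensorProduct.tensorTensorTensorComm k H H H H).toLinearMap =
      S3 k H ∘ₗ TensorProduct.map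
        (LinearMap.rTensor H (comulH k H)) (LinearMap.rTensor H (comulH k H)) := by
  apply TensorProduct.ext_fourfold'
  intro a b x y
  simp [S3, comul2]

private lemma assoc_comp_S3 :
    (TensorProduct.assoc k (H ⊗[k] H) (H ⊗[k] H) (H ⊗[k] H)).toLinearMap ∘ₗ S3 k H =
      T3 k H ∘ₗ TensorProduct.map
        (TensorProduct.assoc k H H H).toLinearMap
        (TensorProduct.assoc k H H H).toLinearMap := by
  ext a b c x y z
  simp [S3, T3]

private lemma comul2_coassoc :
    LinearMap.lTensor (H ⊗[k] H) (comul2 k H) ∘ₗ comul2 k H =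
      (TensorProduct.assoc k (H ⊗[k] H) (H ⊗[k] H) (H ⊗[k] H)).toLinearMap ∘ₗ
        LinearMap.rTensor (H ⊗[k] H) (comul2 k H) ∘ₗ comul2 k H := by
  calc LinearMap.lTensor (H ⊗[k] H) (comul2 k H) ∘ₗ comul2 k H
      = (LinearMap.lTensor (H ⊗[k] H) (comul2 k H) ∘ₗ
          (TensorProduct.tensorTensorTensorComm k H H H H).toLinearMap) ∘ₗ
          TensorProduct.map (comulH k H) (comulH k H) := rfl
    _ = (T3 k H ∘ₗ TensorProduct.map
          (LinearMap.lTensor H (comulH k H)) (LinearMap.lTensor H (comulH k H))) ∘ₗ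
          TensorProduct.map (comulH k H) (comulH k H) := by rw [lT_comul2_comp_ttt]
    _ = T3 k H ∘ₗ TensorProduct.map
          (LinearMap.lTensor H (comulH k H) ∘ₗ comulH k H)
          (LinearMap.lTensor H (comulH k H) ∘ₗ comulH k H) := by
        rw [LinearMap.comp_assoc, ← TensorProduct.map_comp]
    _ = T3 k H ∘ₗ TensorProduct.map
          ((TensorProduct.assoc k H H H).toLinearMap ∘ₗ
            LinearMap.rTensor H (comulH k H) ∘ₗ comulH k H)
          ((TensorProduct.assoc k H H H).toLinearMap ∘ₗ
            LinearMap.rTensor H (comulH k H) ∘ₗ comulH k H) := by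
        rw [show (TensorProduct.assoc k H H H).toLinearMap ∘ₗ
            LinearMap.rTensor H (comulH k H) ∘ₗ comulH k H =
            LinearMap.lTensor H (comulH k H) ∘ₗ comulH k H from Coalgebra.coassoc]
    _ = (T3 k H ∘ₗ TensorProduct.map
          (TensorProduct.assoc k H H H).toLinearMap
          (TensorProduct.assoc k H H H).toLinearMap) ∘ₗ
          TensorProduct.map
            (LinearMap.rTensor H (comulH k H) ∘ₗ comulH k H)
            (LinearMap.rTensor H (comulH k H) ∘ₗ comulH k H) := by
        rw [LinearMap.comp_assoc, ← TensorProduct.map_comp]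
    _ = ((TensorProduct.assoc k (H ⊗[k] H) (H ⊗[k] H) (H ⊗[k] H)).toLinearMap ∘ₗ S3 k H) ∘ₗ
          TensorProduct.map
            (LinearMap.rTensor H (comulH k H) ∘ₗ comulH k H)
            (LinearMap.rTensor H (comulH k H) ∘ₗ comulH k H) := by rw [assoc_comp_S3]
    _ = (TensorProduct.assoc k (H ⊗[k] H) (H ⊗[k] H) (H ⊗[k] H)).toLinearMap ∘ₗ
          ((S3 k H ∘ₗ TensorProduct.map
            (LinearMap.rTensor H (comulH k H)) (LinearMap.rTensor H (comulH k H))) ∘ₗ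
            TensorProduct.map (comulH k H) (comulH k H)) := by
        rw [TensorProduct.map_comp, LinearMap.comp_assoc, LinearMap.comp_assoc]
    _ = (TensorProduct.assoc k (H ⊗[k] H) (H ⊗[k] H) (H ⊗[k] H)).toLinearMap ∘ₗ
          LinearMap.rTensor (H ⊗[k] H) (comul2 k H) ∘ₗ comul2 k H := by
        rw [← rT_comul2_comp_ttt]; rfl

private lemma convCounitR_eq_epsA_comp (g : H ⊗[k] H →ₗ[k] A) :
    convCounitR g = epsA ∘ₗ Fmap g := by
  have h : LinearMap.lTensor A (counitH k H) ∘ₗ TensorProduct.map g (LinearMap.mul' k H) =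
      TensorProduct.map g (counitH k H ∘ₗ LinearMap.mul' k H) := by
    rw [lTensor_comp_map]
  simp only [convCounitR, epsA, Fmap]
  rw [← h]
  rfl

private lemma epsA_rT_assoc (ψ : A ⊗[k] H →ₗ[k] A) :
    epsA ∘ₗ LinearMap.rTensor H ψ ∘ₗ (TensorProduct.assoc k A H H).symm.toLinearMap =
      ψ ∘ₗ LinearMap.lTensor A
        ((TensorProduct.rid k H).toLinearMap ∘ₗ LinearMap.lTensor H (counitH k H)) := by
  ext a x y
  simp [epsA]

private lemma epsA_nabla_Fmap (ρ : H ⊗[k] A →ₗ[k] A) (g : H ⊗[k] H →ₗ[k] A) :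
    epsA ∘ₗ (nablaRho ρ ∘ₗ Fmap g) = conv2 g (rhoAt ρ 1 ∘ₗ LinearMap.mul' k H) := by
  have hrid : (TensorProduct.rid k H).toLinearMap ∘ₗ
      ((TensorProduct.mk k H k).flip 1) = LinearMap.id := by
    apply LinearMap.ext; intro h; simp
  calc epsA ∘ₗ (nablaRho ρ ∘ₗ Fmap g)
      = (epsA ∘ₗ LinearMap.rTensor H
            (LinearMap.mul' k A ∘ₗ LinearMap.lTensor A (rhoAt ρ 1)) ∘ₗ
          (TensorProduct.assoc k A H H).symm.toLinearMap) ∘ₗ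
          (LinearMap.lTensor A (comulH k H) ∘ₗ Fmap g) := rfl
    _ = ((LinearMap.mul' k A ∘ₗ LinearMap.lTensor A (rhoAt ρ 1)) ∘ₗ
          LinearMap.lTensor A ((TensorProduct.rid k H).toLinearMap ∘ₗ
            LinearMap.lTensor H (counitH k H))) ∘ₗ
          (LinearMap.lTensor A (comulH k H) ∘ₗ Fmap g) := by
        rw [epsA_rT_assoc]
    _ = (LinearMap.mul' k A ∘ₗ LinearMap.lTensor A (rhoAt ρ 1)) ∘ₗ
          (LinearMap.lTensor A ((TensorProduct.rid k H).toLinearMap ∘ₗ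
              LinearMap.lTensor H (counitH k H)) ∘ₗ
            LinearMap.lTensor A (comulH k H)) ∘ₗ Fmap g := rfl
    _ = (LinearMap.mul' k A ∘ₗ LinearMap.lTensor A (rhoAt ρ 1)) ∘ₗ
          LinearMap.lTensor A ((TensorProduct.rid k H).toLinearMap ∘ₗ
            LinearMap.lTensor H (counitH k H) ∘ₗ comulH k H) ∘ₗ Fmap g := by
        rw [← LinearMap.lTensor_comp]; rfl
    _ = (LinearMap.mul' k A ∘ₗ LinearMap.lTensor A (rhoAt ρ 1)) ∘ₗ
          LinearMap.lTensor A ((TensorProduct.rid k H).toLinearMap ∘ₗ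
            (TensorProduct.mk k H k).flip 1) ∘ₗ Fmap g := by
        rw [show LinearMap.lTensor H (counitH k H) ∘ₗ comulH k H =
          (TensorProduct.mk k H k).flip 1 from Coalgebra.lTensor_counit_comp_comul]
    _ = (LinearMap.mul' k A ∘ₗ LinearMap.lTensor A (rhoAt ρ 1)) ∘ₗ Fmap g := by
        rw [hrid, LinearMap.lTensor_id, LinearMap.id_comp]
    _ = LinearMap.mul' k A ∘ₗ
          (LinearMap.lTensor A (rhoAt ρ 1) ∘ₗ
            TensorProduct.map g (LinearMap.mul' k H)) ∘ₗ comul2 k H := rfl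
    _ = conv2 g (rhoAt ρ 1 ∘ₗ LinearMap.mul' k H) := by
        rw [lTensor_comp_map]; rfl

private lemma key_C (ρ : H ⊗[k] A →ₗ[k] A) (g : H ⊗[k] H →ₗ[k] A) :
    LinearMap.rTensor H (LinearMap.mul' k A ∘ₗ LinearMap.lTensor A (rhoAt ρ 1)) ∘ₗ
        (TensorProduct.assoc k A H H).symm.toLinearMap ∘ₗ
        LinearMap.lTensor A
          (TensorProduct.map (LinearMap.mul' k H) (LinearMap.mul' k H)) ∘ₗ
        LinearMap.rTensor ((H ⊗[k] H) ⊗[k] (H ⊗[k] H)) g ∘ₗ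
        (TensorProduct.assoc k (H ⊗[k] H) (H ⊗[k] H) (H ⊗[k] H)).toLinearMap =
      LinearMap.rTensor H (LinearMap.mul' k A) ∘ₗ
        TensorProduct.map
          (TensorProduct.map g (rhoAt ρ 1 ∘ₗ LinearMap.mul' k H))
          (LinearMap.mul' k H) := by
  apply TensorProduct.ext_threefold
  intro x u v
  simp

private lemma nabla_comp_Fmap (hWB : IsWeakBialgebra k H) (ρ : H ⊗[k] A →ₗ[k] A)
    (g : H ⊗[k] H →ₗ[k] A) :
    nablaRho ρ ∘ₗ Fmap g = Fmap (conv2 g (rhoAt ρ 1 ∘ₗ LinearMap.mul' k H)) := by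
  have hR : Fmap (conv2 g (rhoAt ρ 1 ∘ₗ LinearMap.mul' k H)) =
      (LinearMap.rTensor H (LinearMap.mul' k A) ∘ₗ
        TensorProduct.map
          (TensorProduct.map g (rhoAt ρ 1 ∘ₗ LinearMap.mul' k H))
          (LinearMap.mul' k H)) ∘ₗ
        (LinearMap.rTensor (H ⊗[k] H) (comul2 k H) ∘ₗ comul2 k H) := by
    simp only [Fmap, conv2]
    rw [← rTensor_comp_map, ← map_comp_rTensor]
    rfl
  calc nablaRho ρ ∘ₗ Fmap g
      = LinearMap.rTensor H (LinearMap.mul' k A ∘ₗ LinearMap.lTensor A (rhoAt ρ 1)) ∘ₗ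
          (TensorProduct.assoc k A H H).symm.toLinearMap ∘ₗ
          (LinearMap.lTensor A (comulH k H) ∘ₗ
            TensorProduct.map g (LinearMap.mul' k H)) ∘ₗ comul2 k H := rfl
    _ = LinearMap.rTensor H (LinearMap.mul' k A ∘ₗ LinearMap.lTensor A (rhoAt ρ 1)) ∘ₗ
          (TensorProduct.assoc k A H H).symm.toLinearMap ∘ₗ
          TensorProduct.map g
            (TensorProduct.map (LinearMap.mul' k H) (LinearMap.mul' k H) ∘ₗ
              comul2 k H) ∘ₗ comul2 k H := by
        rw [lTensor_comp_map, comul_comp_mul hWB]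
    _ = LinearMap.rTensor H (LinearMap.mul' k A ∘ₗ LinearMap.lTensor A (rhoAt ρ 1)) ∘ₗ
          (TensorProduct.assoc k A H H).symm.toLinearMap ∘ₗ
          (LinearMap.lTensor A
              (TensorProduct.map (LinearMap.mul' k H) (LinearMap.mul' k H)) ∘ₗ
            TensorProduct.map g (comul2 k H)) ∘ₗ comul2 k H := by
        rw [lTensor_comp_map]
    _ = LinearMap.rTensor H (LinearMap.mul' k A ∘ₗ LinearMap.lTensor A (rhoAt ρ 1)) ∘ₗ
          (TensorProduct.assoc k A H H).symm.toLinearMap ∘ₗ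
          (LinearMap.lTensor A
              (TensorProduct.map (LinearMap.mul' k H) (LinearMap.mul' k H)) ∘ₗ
            (LinearMap.rTensor ((H ⊗[k] H) ⊗[k] (H ⊗[k] H)) g ∘ₗ
              LinearMap.lTensor (H ⊗[k] H) (comul2 k H))) ∘ₗ comul2 k H := by
        rw [rTensor_comp_lTensor]
    _ = LinearMap.rTensor H (LinearMap.mul' k A ∘ₗ LinearMap.lTensor A (rhoAt ρ 1)) ∘ₗ
          (TensorProduct.assoc k A H H).symm.toLinearMap ∘ₗ
          LinearMap.lTensor A
            (TensorProduct.map (LinearMap.mul' k H) (LinearMap.mul' k H)) ∘ₗ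
          LinearMap.rTensor ((H ⊗[k] H) ⊗[k] (H ⊗[k] H)) g ∘ₗ
          (LinearMap.lTensor (H ⊗[k] H) (comul2 k H) ∘ₗ comul2 k H) := rfl
    _ = (LinearMap.rTensor H (LinearMap.mul' k A ∘ₗ LinearMap.lTensor A (rhoAt ρ 1)) ∘ₗ
          (TensorProduct.assoc k A H H).symm.toLinearMap ∘ₗ
          LinearMap.lTensor A
            (TensorProduct.map (LinearMap.mul' k H) (LinearMap.mul' k H)) ∘ₗ
          LinearMap.rTensor ((H ⊗[k] H) ⊗[k] (H ⊗[k] H)) g ∘ₗ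
          (TensorProduct.assoc k (H ⊗[k] H) (H ⊗[k] H) (H ⊗[k] H)).toLinearMap) ∘ₗ
          (LinearMap.rTensor (H ⊗[k] H) (comul2 k H) ∘ₗ comul2 k H) := by
        rw [comul2_coassoc]; rfl
    _ = (LinearMap.rTensor H (LinearMap.mul' k A) ∘ₗ
          TensorProduct.map
            (TensorProduct.map g (rhoAt ρ 1 ∘ₗ LinearMap.mul' k H))
            (LinearMap.mul' k H)) ∘ₗ
          (LinearMap.rTensor (H ⊗[k] H) (comul2 k H) ∘ₗ comul2 k H) := by
        rw [key_C]
    _ = Fmap (conv2 g (rhoAt ρ 1 ∘ₗ LinearMap.mul' k H)) := hR.symm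

end StatementTwoAux

/-- For a weak measure `ρ` and `f : H ⊗ H → A`, the following
are equivalent: (1) `f(h⊗g) = Σ f(h₍₁₎⊗g₍₁₎) ε(h₍₂₎g₍₂₎)` and `∇_ρ ∘ F_f = F_f`;
(2) `f(h⊗g) = Σ f(h₍₁₎⊗g₍₁₎) ρ(h₍₂₎g₍₂₎ ⊗ 1)`. -/
theorem statement_2 {k : Type*} [Field k]
    {H : Type*} [Ring H] [Algebra k H] [Coalgebra k H]
    {A : Type*} [Ring A] [Algebra k A]
    (hWB : IsWeakBialgebra k H)
    (ρ : H ⊗[k] A →ₗ[k] A) (hρ : IsWeakMeasure ρ)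
    (f : H ⊗[k] H →ₗ[k] A) :
    (f = convCounitR f ∧ nablaRho ρ ∘ₗ Fmap f = Fmap f) ↔
      f = conv2 f (rhoAt ρ 1 ∘ₗ LinearMap.mul' k H) := by
  constructor
  · rintro ⟨hN, hI⟩
    calc f = convCounitR f := hN
      _ = epsA ∘ₗ Fmap f := convCounitR_eq_epsA_comp f
      _ = epsA ∘ₗ (nablaRho ρ ∘ₗ Fmap f) := by rw [hI]
      _ = conv2 f (rhoAt ρ 1 ∘ₗ LinearMap.mul' k H) := epsA_nabla_Fmap ρ f
  · intro h2
    have hC := nabla_comp_Fmap hWB ρ f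
    refine ⟨?_, ?_⟩
    · calc f = conv2 f (rhoAt ρ 1 ∘ₗ LinearMap.mul' k H) := h2
        _ = epsA ∘ₗ (nablaRho ρ ∘ₗ Fmap f) := (epsA_nabla_Fmap ρ f).symm
        _ = epsA ∘ₗ Fmap (conv2 f (rhoAt ρ 1 ∘ₗ LinearMap.mul' k H)) := by rw [hC]
        _ = epsA ∘ₗ Fmap f := by rw [← h2]
        _ = convCounitR f := (convCounitR_eq_epsA_comp f).symm
    · rw [hC, ← h2]

end WeakCrossed
end
end

section
/- Let H be a weak bialgebra over a field k, A a unital associative k-algebra, ρ a weak measure of H on A, and f : H⊗H → A a k-linear map with f(h⊗g) = Σ f(h₍₁₎⊗g₍₁₎) ε(h₍₂₎g₍₂₎) for all h,g ∈ H. Then: (1) f satisfies the twisted module condition if and only if Σ f(h₍₁₎⊗g₍₁₎) ρ(h₍₂₎g₍₂₎⊗a) ⊗ h₍₃₎g₍₃₎ = Σ ρ(h₍₁₎⊗ρ(g₍₁₎⊗a)) f(h₍₂₎⊗g₍₂₎) ⊗ h₍₃₎g₍₃₎ holds in A⊗H for all h,g ∈ H and a ∈ A; (2) f is a cocycle if and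 only if Σ f(h₍₁₎⊗g₍₁₎) f(h₍₂₎g₍₂₎⊗l₍₁₎) ⊗ h₍₃₎g₍₃₎l₍₂₎ = Σ ρ(h₍₁₎⊗f(g₍₁₎⊗l₍₁₎)) f(h₍₂₎⊗g₍₂₎l₍₂₎) ⊗ h₍₃₎g₍₃₎l₍₃₎ holds in A⊗H for all h,g,l ∈ H. -/
/-!
Common framework: weak bialgebras, weak Hopf algebras, weak measures and
unitary weak crossed products, formalized via linear maps over a field `k`.
Sweedler sums are expressed by composites of canonical linear maps.
-/

open TensorProduct

set_option autoImplicit false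
set_option maxHeartbeats 1000000

noncomputable section

namespace WeakCrossed

variable {k : Type*} [Field k]
variable {H : Type*} [Ring H] [Algebra k H] [Coalgebra k H]
variable {A : Type*} [Ring A] [Algebra k A]

variable (k H) in
/-- Iterated comultiplication of the coalgebra `H ⊗ H`. -/
def comul2three : H ⊗[k] H →ₗ[k]
    ((H ⊗[k] H) ⊗[k] (H ⊗[k] H)) ⊗[k] (H ⊗[k] H) :=
  LinearMap.rTensor (H ⊗[k] H) (comul2 k H) ∘ₗ comul2 k H

variable (k H) in
/-- Iterated comultiplication of the coalgebra `(H ⊗ H) ⊗ H`. -/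
def comul3three : (H ⊗[k] H) ⊗[k] H →ₗ[k]
    (((H ⊗[k] H) ⊗[k] H) ⊗[k] ((H ⊗[k] H) ⊗[k] H)) ⊗[k] ((H ⊗[k] H) ⊗[k] H) :=
  LinearMap.rTensor ((H ⊗[k] H) ⊗[k] H) (comul3 k H) ∘ₗ comul3 k H

/-- `(h,g) ↦ Σ f(h₍₁₎⊗g₍₁₎) ρ(h₍₂₎g₍₂₎⊗a) ⊗ h₍₃₎g₍₃₎ ∈ A ⊗ H`. -/
def tmLhsF (ρ : H ⊗[k] A →ₗ[k] A) (f : H ⊗[k] H →ₗ[k] A) (a : A) :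
    H ⊗[k] H →ₗ[k] A ⊗[k] H :=
  TensorProduct.map
    (LinearMap.mul' k A ∘ₗ
      TensorProduct.map f (rhoAt ρ a ∘ₗ LinearMap.mul' k H))
    (LinearMap.mul' k H) ∘ₗ comul2three k H

/-- `(h,g) ↦ Σ ρ(h₍₁₎⊗ρ(g₍₁₎⊗a)) f(h₍₂₎⊗g₍₂₎) ⊗ h₍₃₎g₍₃₎ ∈ A ⊗ H`. -/
def tmRhsF (ρ : H ⊗[k] A →ₗ[k] A) (f : H ⊗[k] H →ₗ[k] A) (a : A) :
    H ⊗[k] H →ₗ[k] A ⊗[k] H :=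
  TensorProduct.map
    (LinearMap.mul' k A ∘ₗ
      TensorProduct.map (ρ ∘ₗ LinearMap.lTensor H (rhoAt ρ a)) f)
    (LinearMap.mul' k H) ∘ₗ comul2three k H

/-- `(h,g,l) ↦ Σ f(h₍₁₎⊗g₍₁₎) f(h₍₂₎g₍₂₎⊗l₍₁₎) ⊗ h₍₃₎g₍₃₎l₍₂₎ ∈ A ⊗ H`. -/
def ccLhsF (f : H ⊗[k] H →ₗ[k] A) : (H ⊗[k] H) ⊗[k] H →ₗ[k] A ⊗[k] H :=
  TensorProduct.map
    (LinearMap.mul' k A ∘ₗ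
      TensorProduct.map f (f ∘ₗ LinearMap.rTensor H (LinearMap.mul' k H)) ∘ₗ
        (TensorProduct.assoc k (H ⊗[k] H) (H ⊗[k] H) H).toLinearMap)
    (LinearMap.mul' k H ∘ₗ LinearMap.rTensor H (LinearMap.mul' k H)) ∘ₗ
  (TensorProduct.tensorTensorTensorComm k
      ((H ⊗[k] H) ⊗[k] (H ⊗[k] H)) (H ⊗[k] H) H H).toLinearMap ∘ₗ
  TensorProduct.map (comul2three k H) (comulH k H)

/-- `(h,g,l) ↦ Σ ρ(h₍₁₎⊗f(g₍₁₎⊗l₍₁₎)) f(h₍₂₎⊗g₍₂₎l₍₂₎) ⊗ h₍₃₎g₍₃₎l₍₃₎ ∈ A ⊗ H`. -/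
def ccRhsF (ρ : H ⊗[k] A →ₗ[k] A) (f : H ⊗[k] H →ₗ[k] A) :
    (H ⊗[k] H) ⊗[k] H →ₗ[k] A ⊗[k] H :=
  TensorProduct.map
    (LinearMap.mul' k A ∘ₗ TensorProduct.map
      (ρ ∘ₗ LinearMap.lTensor H f ∘ₗ (TensorProduct.assoc k H H H).toLinearMap)
      (f ∘ₗ LinearMap.lTensor H (LinearMap.mul' k H) ∘ₗ
        (TensorProduct.assoc k H H H).toLinearMap))
    (LinearMap.mul' k H ∘ₗ LinearMap.rTensor H (LinearMap.mul' k H)) ∘ₗ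
  comul3three k H

/-! ### Auxiliary machinery for Statement 3 -/

section Statement3Aux
set_option linter.unusedSectionVars false
set_option synthInstance.maxHeartbeats 1000000

section GenericModules
variable {M N X Y V W U : Type*}
  [AddCommGroup M] [Module k M] [AddCommGroup N] [Module k N]
  [AddCommGroup X] [Module k X] [AddCommGroup Y] [Module k Y]
  [AddCommGroup V] [Module k V] [AddCommGroup W] [Module k W]
  [AddCommGroup U] [Module k U]

/-- The comultiplication of a tensor product of two "coalgebras". -/
def dT (dM : M →ₗ[k] M ⊗[k] M) (dN : N →ₗ[k] N ⊗[k] N) :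
    M ⊗[k] N →ₗ[k] (M ⊗[k] N) ⊗[k] (M ⊗[k] N) :=
  (TensorProduct.tensorTensorTensorComm k M M N N).toLinearMap ∘ₗ TensorProduct.map dM dN

/-- The operator `x ↦ Σ x₍₁₎ e(x₍₂₎)`. -/
def Nop (dX : X →ₗ[k] X ⊗[k] X) (e : X →ₗ[k] k) : X →ₗ[k] X :=
  (TensorProduct.rid k X).toLinearMap ∘ₗ LinearMap.lTensor X e ∘ₗ dX

lemma dT_tmul (dM : M →ₗ[k] M ⊗[k] M) (dN : N →ₗ[k] N ⊗[k] N) (m : M) (n : N) :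
    dT dM dN (m ⊗ₜ[k] n) =
      (TensorProduct.tensorTensorTensorComm k M M N N) (dM m ⊗ₜ[k] dN n) := by
  simp [dT]

lemma Nop_apply (dX : X →ₗ[k] X ⊗[k] X) (e : X →ₗ[k] k) (x : X) :
    Nop dX e x = (TensorProduct.rid k X) (LinearMap.lTensor X e (dX x)) := rfl

lemma core8 (φ : V →ₗ[k] W) (e : U →ₗ[k] k) (u : V ⊗[k] U) :
    φ ((TensorProduct.rid k V) (LinearMap.lTensor V e u)) =
      (TensorProduct.rid k W) (LinearMap.lTensor W e (LinearMap.rTensor U φ u)) := by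
  induction u using TensorProduct.induction_on with
  | zero => simp
  | tmul v x => simp
  | add a b ha hb => simp only [map_add]; rw [ha, hb]

lemma core9sub (e : X →ₗ[k] k) (x₁ : V) (t : W ⊗[k] X) :
    (TensorProduct.rid k (V ⊗[k] W)) (LinearMap.lTensor (V ⊗[k] W) e
      ((TensorProduct.assoc k V W X).symm (x₁ ⊗ₜ[k] t))) =
    x₁ ⊗ₜ[k] ((TensorProduct.rid k W) (LinearMap.lTensor W e t)) := by
  induction t using TensorProduct.induction_on with
  | zero => simp
  | tmul w x => simp [TensorProduct.tmul_smul, TensorProduct.smul_tmul']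
  | add a b ha hb => simp [TensorProduct.tmul_add, ha, hb]

lemma core9 (φ : X →ₗ[k] X ⊗[k] X) (e : X →ₗ[k] k) (u : X ⊗[k] X) :
    (TensorProduct.rid k (X ⊗[k] X)) (LinearMap.lTensor (X ⊗[k] X) e
      ((TensorProduct.assoc k X X X).symm (LinearMap.lTensor X φ u))) =
    LinearMap.lTensor X ((TensorProduct.rid k X).toLinearMap ∘ₗ
      LinearMap.lTensor X e ∘ₗ φ) u := by
  induction u using TensorProduct.induction_on with
  | zero => simp
  | tmul x₁ x₂ => simpa using core9sub e x₁ (φ x₂)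
  | add a b ha hb => simp [ha, hb]

lemma NopComul (dX : X →ₗ[k] X ⊗[k] X) (e : X →ₗ[k] k)
    (hco : ∀ x, (TensorProduct.assoc k X X X) (LinearMap.rTensor X dX (dX x)) =
      LinearMap.lTensor X dX (dX x)) :
    dX ∘ₗ Nop dX e = LinearMap.lTensor X (Nop dX e) ∘ₗ dX := by
  apply LinearMap.ext; intro x
  have hco' : LinearMap.rTensor X dX (dX x) =
      (TensorProduct.assoc k X X X).symm (LinearMap.lTensor X dX (dX x)) := by
    rw [← hco x, LinearEquiv.symm_apply_apply]
  simp only [LinearMap.comp_apply, Nop_apply]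
  rw [core8 dX e (dX x), hco', core9]
  rfl

lemma core1 (f : M →ₗ[k] M ⊗[k] M) (g : N →ₗ[k] N ⊗[k] N) (u : M ⊗[k] M) (v : N ⊗[k] N) :
    (TensorProduct.assoc k (M ⊗[k] N) (M ⊗[k] N) (M ⊗[k] N))
      (LinearMap.rTensor (M ⊗[k] N) (dT f g)
        ((TensorProduct.tensorTensorTensorComm k M M N N) (u ⊗ₜ[k] v))) =
    (TensorProduct.assoc k (M ⊗[k] N) (M ⊗[k] N) (M ⊗[k] N))
      (LinearMap.rTensor (M ⊗[k] N)
          (TensorProduct.tensorTensorTensorComm k M M N N).toLinearMap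
        ((TensorProduct.tensorTensorTensorComm k (M ⊗[k] M) M (N ⊗[k] N) N)
          ((LinearMap.rTensor M f u) ⊗ₜ[k] (LinearMap.rTensor N g v)))) := by
  induction u using TensorProduct.induction_on with
  | zero => simp
  | tmul m₁ m₂ =>
    induction v using TensorProduct.induction_on with
    | zero => simp
    | tmul n₁ n₂ => simp [dT_tmul]
    | add a b ha hb =>
      simp only [TensorProduct.tmul_add, TensorProduct.add_tmul, map_add]
      rw [ha, hb]
  | add a b ha hb =>
    simp only [TensorProduct.tmul_add, TensorProduct.add_tmul, map_add]
    rw [ha, hb]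

lemma core2 (p : M ⊗[k] (M ⊗[k] M)) (q : N ⊗[k] (N ⊗[k] N)) :
    (TensorProduct.assoc k (M ⊗[k] N) (M ⊗[k] N) (M ⊗[k] N))
      (LinearMap.rTensor (M ⊗[k] N)
          (TensorProduct.tensorTensorTensorComm k M M N N).toLinearMap
        ((TensorProduct.tensorTensorTensorComm k (M ⊗[k] M) M (N ⊗[k] N) N)
          (((TensorProduct.assoc k M M M).symm p) ⊗ₜ[k]
            ((TensorProduct.assoc k N N N).symm q)))) =
    LinearMap.lTensor (M ⊗[k] N)
        (TensorProduct.tensorTensorTensorComm k M M N N).toLinearMap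
      ((TensorProduct.tensorTensorTensorComm k M (M ⊗[k] M) N (N ⊗[k] N)) (p ⊗ₜ[k] q)) := by
  induction p using TensorProduct.induction_on with
  | zero => simp
  | tmul m₁ w =>
    induction q using TensorProduct.induction_on with
    | zero => simp
    | tmul n₁ z =>
      induction w using TensorProduct.induction_on with
      | zero => simp
      | tmul m₂ m₃ =>
        induction z using TensorProduct.induction_on with
        | zero => simp
        | tmul n₂ n₃ => simp
        | add a b ha hb =>
          simp only [TensorProduct.tmul_add, TensorProduct.add_tmul, map_add]
          rw [ha, hb]
      | add a b ha hb =>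
        simp only [TensorProduct.tmul_add, TensorProduct.add_tmul, map_add]
        rw [ha, hb]
    | add a b ha hb =>
      simp only [TensorProduct.tmul_add, TensorProduct.add_tmul, map_add]
      rw [ha, hb]
  | add a b ha hb =>
    simp only [TensorProduct.tmul_add, TensorProduct.add_tmul, map_add]
    rw [ha, hb]

lemma core3 (f : M →ₗ[k] M ⊗[k] M) (g : N →ₗ[k] N ⊗[k] N) (u : M ⊗[k] M) (v : N ⊗[k] N) :
    LinearMap.lTensor (M ⊗[k] N)
        (TensorProduct.tensorTensorTensorComm k M M N N).toLinearMap
      ((TensorProduct.tensorTensorTensorComm k M (M ⊗[k] M) N (N ⊗[k] N))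
        ((LinearMap.lTensor M f u) ⊗ₜ[k] (LinearMap.lTensor N g v))) =
    LinearMap.lTensor (M ⊗[k] N) (dT f g)
      ((TensorProduct.tensorTensorTensorComm k M M N N) (u ⊗ₜ[k] v)) := by
  induction u using TensorProduct.induction_on with
  | zero => simp
  | tmul m₁ m₂ =>
    induction v using TensorProduct.induction_on with
    | zero => simp
    | tmul n₁ n₂ => simp [dT_tmul]
    | add a b ha hb =>
      simp only [TensorProduct.tmul_add, TensorProduct.add_tmul, map_add]
      rw [ha, hb]
  | add a b ha hb =>
    simp only [TensorProduct.tmul_add, TensorProduct.add_tmul, map_add]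
    rw [ha, hb]

lemma coassoc_T (dM : M →ₗ[k] M ⊗[k] M) (dN : N →ₗ[k] N ⊗[k] N)
    (hM : ∀ m, (TensorProduct.assoc k M M M) (LinearMap.rTensor M dM (dM m)) =
      LinearMap.lTensor M dM (dM m))
    (hN : ∀ n, (TensorProduct.assoc k N N N) (LinearMap.rTensor N dN (dN n)) =
      LinearMap.lTensor N dN (dN n)) :
    ∀ z, (TensorProduct.assoc k (M ⊗[k] N) (M ⊗[k] N) (M ⊗[k] N))
      (LinearMap.rTensor (M ⊗[k] N) (dT dM dN) (dT dM dN z)) =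
      LinearMap.lTensor (M ⊗[k] N) (dT dM dN) (dT dM dN z) := by
  suffices h : (TensorProduct.assoc k (M ⊗[k] N) (M ⊗[k] N) (M ⊗[k] N)).toLinearMap ∘ₗ
      LinearMap.rTensor (M ⊗[k] N) (dT dM dN) ∘ₗ dT dM dN =
      LinearMap.lTensor (M ⊗[k] N) (dT dM dN) ∘ₗ dT dM dN by
    intro z
    simpa using LinearMap.congr_fun h z
  ext m n
  have hM' : LinearMap.rTensor M dM (dM m) =
      (TensorProduct.assoc k M M M).symm (LinearMap.lTensor M dM (dM m)) := by
    rw [← hM m, LinearEquiv.symm_apply_apply]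
  have hN' : LinearMap.rTensor N dN (dN n) =
      (TensorProduct.assoc k N N N).symm (LinearMap.lTensor N dN (dN n)) := by
    rw [← hN n, LinearEquiv.symm_apply_apply]
  show (TensorProduct.assoc k (M ⊗[k] N) (M ⊗[k] N) (M ⊗[k] N))
      (LinearMap.rTensor (M ⊗[k] N) (dT dM dN) (dT dM dN (m ⊗ₜ[k] n))) =
      LinearMap.lTensor (M ⊗[k] N) (dT dM dN) (dT dM dN (m ⊗ₜ[k] n))
  rw [dT_tmul, core1, hM', hN', core2, ← core3]

lemma coreM (mM : M →ₗ[k] H) (mN : N →ₗ[k] H) (u : M ⊗[k] M) (v : N ⊗[k] N) :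
    TensorProduct.map (LinearMap.mul' k H ∘ₗ TensorProduct.map mM mN)
        (LinearMap.mul' k H ∘ₗ TensorProduct.map mM mN)
      ((TensorProduct.tensorTensorTensorComm k M M N N) (u ⊗ₜ[k] v)) =
    (TensorProduct.map mM mM u) * (TensorProduct.map mN mN v) := by
  induction u using TensorProduct.induction_on with
  | zero => simp
  | tmul m₁ m₂ =>
    induction v using TensorProduct.induction_on with
    | zero => simp
    | tmul n₁ n₂ => simp [Algebra.TensorProduct.tmul_mul_tmul]
    | add a b ha hb =>
      simp only [TensorProduct.tmul_add, TensorProduct.add_tmul, map_add, mul_add, add_mul]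
      rw [ha, hb]
  | add a b ha hb =>
    simp only [TensorProduct.tmul_add, TensorProduct.add_tmul, map_add, mul_add, add_mul]
    rw [ha, hb]

lemma multcompat (dM : M →ₗ[k] M ⊗[k] M) (dN : N →ₗ[k] N ⊗[k] N)
    (mM : M →ₗ[k] H) (mN : N →ₗ[k] H)
    (hM : ∀ m, TensorProduct.map mM mM (dM m) = Coalgebra.comul (mM m))
    (hN : ∀ n, TensorProduct.map mN mN (dN n) = Coalgebra.comul (mN n))
    (hcm : ∀ x y : H, Coalgebra.comul (x * y) =
      (Coalgebra.comul x : H ⊗[k] H) * Coalgebra.comul y) :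
    ∀ z, TensorProduct.map (LinearMap.mul' k H ∘ₗ TensorProduct.map mM mN)
        (LinearMap.mul' k H ∘ₗ TensorProduct.map mM mN) (dT dM dN z) =
      Coalgebra.comul ((LinearMap.mul' k H ∘ₗ TensorProduct.map mM mN) z) := by
  suffices h : TensorProduct.map (LinearMap.mul' k H ∘ₗ TensorProduct.map mM mN)
        (LinearMap.mul' k H ∘ₗ TensorProduct.map mM mN) ∘ₗ dT dM dN =
      (Coalgebra.comul : H →ₗ[k] H ⊗[k] H) ∘ₗ (LinearMap.mul' k H ∘ₗ TensorProduct.map mM mN) by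
    intro z; simpa using LinearMap.congr_fun h z
  ext m n
  show TensorProduct.map _ _ (dT dM dN (m ⊗ₜ[k] n)) = Coalgebra.comul
    ((LinearMap.mul' k H ∘ₗ TensorProduct.map mM mN) (m ⊗ₜ[k] n))
  rw [dT_tmul, coreM, hM, hN, ← hcm]
  simp

lemma counit_right (h : H) :
    (TensorProduct.rid k H) (LinearMap.lTensor H (Coalgebra.counit (R := k))
      (Coalgebra.comul h)) = h := by
  have := LinearMap.congr_fun (Coalgebra.lTensor_counit_comp_comul (R := k) (A := H)) h
  simp only [LinearMap.comp_apply] at this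
  rw [this]
  simp

lemma core4 (mX : X →ₗ[k] H) (u : X ⊗[k] X) :
    mX ((TensorProduct.rid k X) (LinearMap.lTensor X ((Coalgebra.counit (R := k)) ∘ₗ mX) u)) =
    (TensorProduct.rid k H) (LinearMap.lTensor H (Coalgebra.counit (R := k))
      (TensorProduct.map mX mX u)) := by
  induction u using TensorProduct.induction_on with
  | zero => simp
  | tmul x₁ x₂ => simp
  | add a b ha hb => simp only [map_add]; rw [ha, hb]

lemma Nop_mul (dX : X →ₗ[k] X ⊗[k] X) (mX : X →ₗ[k] H)
    (hX : ∀ x, TensorProduct.map mX mX (dX x) = Coalgebra.comul (mX x)) :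
    mX ∘ₗ Nop dX ((Coalgebra.counit (R := k)) ∘ₗ mX) = mX := by
  apply LinearMap.ext; intro x
  simp only [LinearMap.comp_apply, Nop_apply]
  rw [core4, hX, counit_right]

lemma core5 (π : X →ₗ[k] Y) (eX : X →ₗ[k] k) (eY : Y →ₗ[k] k)
    (hπe : ∀ x, eY (π x) = eX x) (u : X ⊗[k] X) :
    π ((TensorProduct.rid k X) (LinearMap.lTensor X eX u)) =
    (TensorProduct.rid k Y) (LinearMap.lTensor Y eY (TensorProduct.map π π u)) := by
  induction u using TensorProduct.induction_on with
  | zero => simp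
  | tmul x₁ x₂ => simp [hπe]
  | add a b ha hb => simp only [map_add]; rw [ha, hb]

lemma Nop_comap (dX : X →ₗ[k] X ⊗[k] X) (dY : Y →ₗ[k] Y ⊗[k] Y)
    (eX : X →ₗ[k] k) (eY : Y →ₗ[k] k) (π : X →ₗ[k] Y)
    (hπd : ∀ x, dY (π x) = TensorProduct.map π π (dX x))
    (hπe : ∀ x, eY (π x) = eX x) :
    π ∘ₗ Nop dX eX = Nop dY eY ∘ₗ π := by
  apply LinearMap.ext; intro x
  simp only [LinearMap.comp_apply, Nop_apply]
  rw [core5 π eX eY hπe, ← hπd]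

lemma core6 (α : X →ₗ[k] A) (mX : X →ₗ[k] H) (u : X ⊗[k] X) :
    (TensorProduct.rid k A) (LinearMap.lTensor A (Coalgebra.counit (R := k))
      (TensorProduct.map α mX u)) =
    α ((TensorProduct.rid k X) (LinearMap.lTensor X ((Coalgebra.counit (R := k)) ∘ₗ mX) u)) := by
  induction u using TensorProduct.induction_on with
  | zero => simp
  | tmul x₁ x₂ => simp
  | add a b ha hb => simp only [map_add]; rw [ha, hb]

lemma core7 (α : V →ₗ[k] A) (β : W →ₗ[k] A) (γ : W →ₗ[k] W) (t : V ⊗[k] W) :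
    TensorProduct.map α β (LinearMap.lTensor V γ t) = TensorProduct.map α (β ∘ₗ γ) t := by
  induction t using TensorProduct.induction_on with
  | zero => simp
  | tmul v w => simp
  | add a b ha hb => simp only [map_add]; rw [ha, hb]

lemma core10 (α : X →ₗ[k] A) (e : X →ₗ[k] k) (u : X ⊗[k] X) :
    (TensorProduct.rid k A) (TensorProduct.map α e u) =
    α ((TensorProduct.rid k X) (LinearMap.lTensor X e u)) := by
  induction u using TensorProduct.induction_on with
  | zero => simp
  | tmul x₁ x₂ => simp
  | add a b ha hb => simp only [map_add]; rw [ha, hb]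

lemma strY (e : M ⊗[k] N →ₗ[k] k) :
    ((TensorProduct.rid k (M ⊗[k] (M ⊗[k] N))).toLinearMap ∘ₗ
      LinearMap.lTensor (M ⊗[k] (M ⊗[k] N)) e ∘ₗ
      LinearMap.rTensor (M ⊗[k] N) (TensorProduct.assoc k M M N).toLinearMap ∘ₗ
      (TensorProduct.tensorTensorTensorComm k (M ⊗[k] M) M N N).toLinearMap) ∘ₗ
      LinearMap.rTensor (N ⊗[k] N) (TensorProduct.assoc k M M M).symm.toLinearMap =
    LinearMap.lTensor M ((TensorProduct.rid k (M ⊗[k] N)).toLinearMap ∘ₗ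
        LinearMap.lTensor (M ⊗[k] N) e) ∘ₗ
      LinearMap.lTensor M (TensorProduct.tensorTensorTensorComm k M M N N).toLinearMap ∘ₗ
      (TensorProduct.assoc k M (M ⊗[k] M) (N ⊗[k] N)).toLinearMap := by
  ext x u v y y'
  simp

lemma coreY2 (f : M →ₗ[k] M ⊗[k] M) (u : M ⊗[k] M) (v : N ⊗[k] N) :
    LinearMap.rTensor (M ⊗[k] N)
        ((TensorProduct.assoc k M M N).toLinearMap ∘ₗ LinearMap.rTensor N f)
      ((TensorProduct.tensorTensorTensorComm k M M N N) (u ⊗ₜ[k] v)) =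
    LinearMap.rTensor (M ⊗[k] N) (TensorProduct.assoc k M M N).toLinearMap
      ((TensorProduct.tensorTensorTensorComm k (M ⊗[k] M) M N N)
        ((LinearMap.rTensor M f u) ⊗ₜ[k] v)) := by
  induction u using TensorProduct.induction_on with
  | zero => simp
  | tmul m₁ m₂ =>
    induction v using TensorProduct.induction_on with
    | zero => simp
    | tmul n₁ n₂ => simp
    | add a b ha hb =>
      simp only [TensorProduct.tmul_add, TensorProduct.add_tmul, map_add]; rw [ha, hb]
  | add a b ha hb =>
    simp only [TensorProduct.tmul_add, TensorProduct.add_tmul, map_add]; rw [ha, hb]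

lemma coreY5 (f : M →ₗ[k] M ⊗[k] M) (g : N →ₗ[k] N ⊗[k] N) (u : M ⊗[k] M) (n : N) :
    LinearMap.lTensor M (dT f g) ((TensorProduct.assoc k M M N) (u ⊗ₜ[k] n)) =
    LinearMap.lTensor M (TensorProduct.tensorTensorTensorComm k M M N N).toLinearMap
      ((TensorProduct.assoc k M (M ⊗[k] M) (N ⊗[k] N))
        ((LinearMap.lTensor M f u) ⊗ₜ[k] (g n))) := by
  induction u using TensorProduct.induction_on with
  | zero => simp
  | tmul m₁ m₂ => simp [dT_tmul]
  | add a b ha hb =>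
    simp only [TensorProduct.tmul_add, TensorProduct.add_tmul, map_add]; rw [ha, hb]

lemma NopY (dM : M →ₗ[k] M ⊗[k] M) (dN : N →ₗ[k] N ⊗[k] N) (e : M ⊗[k] N →ₗ[k] k)
    (hcoM : ∀ m, (TensorProduct.assoc k M M M) (LinearMap.rTensor M dM (dM m)) =
      LinearMap.lTensor M dM (dM m)) :
    ((TensorProduct.assoc k M M N).toLinearMap ∘ₗ LinearMap.rTensor N dM) ∘ₗ
        Nop (dT dM dN) e =
      LinearMap.lTensor M (Nop (dT dM dN) e) ∘ₗ
        ((TensorProduct.assoc k M M N).toLinearMap ∘ₗ LinearMap.rTensor N dM) := by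
  ext m n
  show ((TensorProduct.assoc k M M N).toLinearMap ∘ₗ LinearMap.rTensor N dM)
      (Nop (dT dM dN) e (m ⊗ₜ[k] n)) =
    LinearMap.lTensor M (Nop (dT dM dN) e)
      (((TensorProduct.assoc k M M N).toLinearMap ∘ₗ LinearMap.rTensor N dM) (m ⊗ₜ[k] n))
  have hM' : LinearMap.rTensor M dM (dM m) =
      (TensorProduct.assoc k M M M).symm (LinearMap.lTensor M dM (dM m)) := by
    rw [← hcoM m, LinearEquiv.symm_apply_apply]
  rw [Nop_apply, core8, dT_tmul, coreY2, hM']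
  have hstr := LinearMap.congr_fun (strY (M := M) (N := N) (k := k) e)
    ((LinearMap.lTensor M dM (dM m)) ⊗ₜ[k] (dN n))
  simp only [LinearMap.comp_apply, LinearMap.rTensor_tmul, LinearEquiv.coe_coe] at hstr
  rw [hstr]
  have hsplit : Nop (dT dM dN) e = ((TensorProduct.rid k (M ⊗[k] N)).toLinearMap ∘ₗ
      LinearMap.lTensor (M ⊗[k] N) e) ∘ₗ dT dM dN := rfl
  rw [hsplit]
  simp only [LinearMap.lTensor_comp, LinearMap.comp_apply, LinearMap.rTensor_tmul,
    LinearEquiv.coe_coe]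
  rw [coreY5]

end GenericModules

end Statement3Aux


section SpecificAux
set_option linter.unusedSectionVars false
set_option synthInstance.maxHeartbeats 1000000

variable (k H) in
/-- `ε ∘ μ : H ⊗ H → k`. -/
def e2' : H ⊗[k] H →ₗ[k] k := counitH k H ∘ₗ LinearMap.mul' k H

variable (k H) in
/-- `μ ∘ (μ ⊗ id) : (H ⊗ H) ⊗ H → H`. -/
def m3' : (H ⊗[k] H) ⊗[k] H →ₗ[k] H :=
  LinearMap.mul' k H ∘ₗ LinearMap.rTensor H (LinearMap.mul' k H)

variable (k H) in
def e3' : (H ⊗[k] H) ⊗[k] H →ₗ[k] k := counitH k H ∘ₗ m3' k H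

variable (k H) in
def N2' : H ⊗[k] H →ₗ[k] H ⊗[k] H := Nop (comul2 k H) (e2' k H)

variable (k H) in
def N3' : (H ⊗[k] H) ⊗[k] H →ₗ[k] (H ⊗[k] H) ⊗[k] H := Nop (comul3 k H) (e3' k H)

variable (k H) in
def qmap : (H ⊗[k] H) ⊗[k] H →ₗ[k] H ⊗[k] H :=
  LinearMap.lTensor H (LinearMap.mul' k H) ∘ₗ (TensorProduct.assoc k H H H).toLinearMap

variable (k H) in
def pimap : (H ⊗[k] H) ⊗[k] H →ₗ[k] H ⊗[k] H :=
  LinearMap.rTensor H (LinearMap.mul' k H)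

lemma comul2_eq_dT : comul2 k H = dT (comulH k H) (comulH k H) := rfl

lemma comul3_eq_dT : comul3 k H = dT (comul2 k H) (comulH k H) := rfl

lemma hco2 : ∀ z : H ⊗[k] H,
    (TensorProduct.assoc k (H ⊗[k] H) (H ⊗[k] H) (H ⊗[k] H))
      (LinearMap.rTensor (H ⊗[k] H) (comul2 k H) (comul2 k H z)) =
      LinearMap.lTensor (H ⊗[k] H) (comul2 k H) (comul2 k H z) := by
  rw [comul2_eq_dT]
  exact coassoc_T _ _ (fun m => Coalgebra.coassoc_apply m) (fun n => Coalgebra.coassoc_apply n)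

lemma hco3 : ∀ z : (H ⊗[k] H) ⊗[k] H,
    (TensorProduct.assoc k ((H ⊗[k] H) ⊗[k] H) ((H ⊗[k] H) ⊗[k] H) ((H ⊗[k] H) ⊗[k] H))
      (LinearMap.rTensor ((H ⊗[k] H) ⊗[k] H) (comul3 k H) (comul3 k H z)) =
      LinearMap.lTensor ((H ⊗[k] H) ⊗[k] H) (comul3 k H) (comul3 k H z) := by
  rw [comul3_eq_dT]
  exact coassoc_T _ _ hco2 (fun n => Coalgebra.coassoc_apply n)

lemma compat2 (hWB : IsWeakBialgebra k H) : ∀ z : H ⊗[k] H,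
    TensorProduct.map (LinearMap.mul' k H) (LinearMap.mul' k H) (comul2 k H z) =
      Coalgebra.comul (LinearMap.mul' k H z) := by
  have h := multcompat (comulH k H) (comulH k H) (LinearMap.id) (LinearMap.id)
    (by simp) (by simp) hWB.comul_mul
  intro z
  have := h z
  simpa [comul2_eq_dT, TensorProduct.map_id] using this

lemma compat3 (hWB : IsWeakBialgebra k H) : ∀ z : (H ⊗[k] H) ⊗[k] H,
    TensorProduct.map (m3' k H) (m3' k H) (comul3 k H z) =
      Coalgebra.comul (m3' k H z) := by
  have h := multcompat (comul2 k H) (comulH k H) (LinearMap.mul' k H) (LinearMap.id)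
    (compat2 hWB) (by simp) hWB.comul_mul
  intro z
  have h2 := h z
  rw [comul3_eq_dT]
  exact h2

lemma ND2 : comul2 k H ∘ₗ N2' k H =
    LinearMap.lTensor (H ⊗[k] H) (N2' k H) ∘ₗ comul2 k H :=
  NopComul _ _ hco2

lemma ND3 : comul3 k H ∘ₗ N3' k H =
    LinearMap.lTensor ((H ⊗[k] H) ⊗[k] H) (N3' k H) ∘ₗ comul3 k H :=
  NopComul _ _ hco3

lemma m2N2 (hWB : IsWeakBialgebra k H) :
    LinearMap.mul' k H ∘ₗ N2' k H = LinearMap.mul' k H :=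
  Nop_mul _ _ (compat2 hWB)

lemma m3N3 (hWB : IsWeakBialgebra k H) :
    m3' k H ∘ₗ N3' k H = m3' k H :=
  Nop_mul _ _ (compat3 hWB)

lemma coreq (u v w : H ⊗[k] H) :
    TensorProduct.map (qmap k H) (qmap k H)
      ((TensorProduct.tensorTensorTensorComm k (H ⊗[k] H) (H ⊗[k] H) H H)
        (((TensorProduct.tensorTensorTensorComm k H H H H) (u ⊗ₜ[k] v)) ⊗ₜ[k] w)) =
    (TensorProduct.tensorTensorTensorComm k H H H H) (u ⊗ₜ[k] (v * w)) := by
  induction u using TensorProduct.induction_on with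
  | zero => simp
  | tmul h₁ h₂ =>
    induction v using TensorProduct.induction_on with
    | zero => simp
    | tmul g₁ g₂ =>
      induction w using TensorProduct.induction_on with
      | zero => simp
      | tmul l₁ l₂ => simp [qmap, Algebra.TensorProduct.tmul_mul_tmul]
      | add a b ha hb =>
        simp only [TensorProduct.tmul_add, TensorProduct.add_tmul, map_add, mul_add, add_mul]
        rw [ha, hb]
    | add a b ha hb =>
      simp only [TensorProduct.tmul_add, TensorProduct.add_tmul, map_add, mul_add, add_mul]
      rw [ha, hb]
  | add a b ha hb =>
    simp only [TensorProduct.tmul_add, TensorProduct.add_tmul, map_add, mul_add, add_mul]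
    rw [ha, hb]

lemma corep (u v w : H ⊗[k] H) :
    TensorProduct.map (pimap k H) (pimap k H)
      ((TensorProduct.tensorTensorTensorComm k (H ⊗[k] H) (H ⊗[k] H) H H)
        (((TensorProduct.tensorTensorTensorComm k H H H H) (u ⊗ₜ[k] v)) ⊗ₜ[k] w)) =
    (TensorProduct.tensorTensorTensorComm k H H H H) ((u * v) ⊗ₜ[k] w) := by
  induction u using TensorProduct.induction_on with
  | zero => simp
  | tmul h₁ h₂ =>
    induction v using TensorProduct.induction_on with
    | zero => simp
    | tmul g₁ g₂ =>
      induction w using TensorProduct.induction_on with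
      | zero => simp
      | tmul l₁ l₂ => simp [pimap, Algebra.TensorProduct.tmul_mul_tmul]
      | add a b ha hb =>
        simp only [TensorProduct.tmul_add, TensorProduct.add_tmul, map_add, mul_add, add_mul]
        rw [ha, hb]
    | add a b ha hb =>
      simp only [TensorProduct.tmul_add, TensorProduct.add_tmul, map_add, mul_add, add_mul]
      rw [ha, hb]
  | add a b ha hb =>
    simp only [TensorProduct.tmul_add, TensorProduct.add_tmul, map_add, mul_add, add_mul]
    rw [ha, hb]

lemma hqm : LinearMap.mul' k H ∘ₗ qmap k H = m3' k H := by
  ext h g l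
  simp [qmap, m3', mul_assoc]

lemma hpim : LinearMap.mul' k H ∘ₗ pimap k H = m3' k H := rfl

lemma hqd (hWB : IsWeakBialgebra k H) : ∀ d : (H ⊗[k] H) ⊗[k] H,
    comul2 k H (qmap k H d) = TensorProduct.map (qmap k H) (qmap k H) (comul3 k H d) := by
  suffices h : comul2 k H ∘ₗ qmap k H =
      TensorProduct.map (qmap k H) (qmap k H) ∘ₗ comul3 k H by
    intro d; simpa using LinearMap.congr_fun h d
  ext h g l
  show comul2 k H (qmap k H ((h ⊗ₜ[k] g) ⊗ₜ[k] l)) =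
    TensorProduct.map (qmap k H) (qmap k H) (comul3 k H ((h ⊗ₜ[k] g) ⊗ₜ[k] l))
  have hq : qmap k H ((h ⊗ₜ[k] g) ⊗ₜ[k] l) = h ⊗ₜ[k] (g * l) := by simp [qmap]
  rw [hq, comul2_eq_dT, comul3_eq_dT, dT_tmul, dT_tmul, comul2_eq_dT, dT_tmul, coreq]
  show (TensorProduct.tensorTensorTensorComm k H H H H)
      (comulH k H h ⊗ₜ[k] comulH k H (g * l)) = _
  rw [hWB.comul_mul]

lemma hpid (hWB : IsWeakBialgebra k H) : ∀ d : (H ⊗[k] H) ⊗[k] H,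
    comul2 k H (pimap k H d) = TensorProduct.map (pimap k H) (pimap k H) (comul3 k H d) := by
  suffices h : comul2 k H ∘ₗ pimap k H =
      TensorProduct.map (pimap k H) (pimap k H) ∘ₗ comul3 k H by
    intro d; simpa using LinearMap.congr_fun h d
  ext h g l
  show comul2 k H (pimap k H ((h ⊗ₜ[k] g) ⊗ₜ[k] l)) =
    TensorProduct.map (pimap k H) (pimap k H) (comul3 k H ((h ⊗ₜ[k] g) ⊗ₜ[k] l))
  have hp : pimap k H ((h ⊗ₜ[k] g) ⊗ₜ[k] l) = (h * g) ⊗ₜ[k] l := by simp [pimap]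
  rw [hp, comul2_eq_dT, comul3_eq_dT, dT_tmul, dT_tmul, comul2_eq_dT, dT_tmul, corep]
  show (TensorProduct.tensorTensorTensorComm k H H H H)
      (comulH k H (h * g) ⊗ₜ[k] comulH k H l) = _
  rw [hWB.comul_mul]

lemma qN3 (hWB : IsWeakBialgebra k H) :
    qmap k H ∘ₗ N3' k H = N2' k H ∘ₗ qmap k H := by
  refine Nop_comap _ _ _ _ _ (hqd hWB) ?_
  intro x
  have := LinearMap.congr_fun (hqm (k := k) (H := H)) x
  simp only [LinearMap.comp_apply] at this ⊢
  rw [e2', e3', LinearMap.comp_apply, LinearMap.comp_apply, this]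

lemma piN3 (hWB : IsWeakBialgebra k H) :
    pimap k H ∘ₗ N3' k H = N2' k H ∘ₗ pimap k H := by
  refine Nop_comap _ _ _ _ _ (hpid hWB) ?_
  intro x
  rfl

lemma coreLD (φ : H ⊗[k] H →ₗ[k] (H ⊗[k] H) ⊗[k] (H ⊗[k] H))
    (u : (H ⊗[k] H) ⊗[k] (H ⊗[k] H)) (v : H ⊗[k] H) :
    LinearMap.rTensor ((H ⊗[k] H) ⊗[k] H) (LinearMap.rTensor H φ)
      ((TensorProduct.tensorTensorTensorComm k (H ⊗[k] H) (H ⊗[k] H) H H) (u ⊗ₜ[k] v)) =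
    (TensorProduct.tensorTensorTensorComm k ((H ⊗[k] H) ⊗[k] (H ⊗[k] H)) (H ⊗[k] H) H H)
      ((LinearMap.rTensor (H ⊗[k] H) φ u) ⊗ₜ[k] v) := by
  induction u using TensorProduct.induction_on with
  | zero => simp
  | tmul c₁ c₂ =>
    induction v using TensorProduct.induction_on with
    | zero => simp
    | tmul l₁ l₂ => simp
    | add a b ha hb =>
      simp only [TensorProduct.tmul_add, TensorProduct.add_tmul, map_add]; rw [ha, hb]
  | add a b ha hb =>
    simp only [TensorProduct.tmul_add, TensorProduct.add_tmul, map_add]; rw [ha, hb]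

lemma LD : LinearMap.rTensor ((H ⊗[k] H) ⊗[k] H) (LinearMap.rTensor H (comul2 k H)) ∘ₗ
      comul3 k H =
    (TensorProduct.tensorTensorTensorComm k
        ((H ⊗[k] H) ⊗[k] (H ⊗[k] H)) (H ⊗[k] H) H H).toLinearMap ∘ₗ
      TensorProduct.map (comul2three k H) (comulH k H) := by
  ext h g l
  show LinearMap.rTensor _ (LinearMap.rTensor H (comul2 k H))
      (comul3 k H ((h ⊗ₜ[k] g) ⊗ₜ[k] l)) =
    (TensorProduct.tensorTensorTensorComm k _ (H ⊗[k] H) H H)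
      (TensorProduct.map (comul2three k H) (comulH k H) ((h ⊗ₜ[k] g) ⊗ₜ[k] l))
  rw [comul3_eq_dT, dT_tmul, coreLD]
  simp only [TensorProduct.map_tmul]
  rfl

end SpecificAux


section GlueAux
set_option linter.unusedSectionVars false
set_option synthInstance.maxHeartbeats 1000000

lemma convCR (α : H ⊗[k] H →ₗ[k] A) : convCounitR α = α ∘ₗ N2' k H := by
  apply LinearMap.ext; intro z
  simp only [convCounitR, LinearMap.comp_apply, LinearEquiv.coe_coe]
  have h := core10 (A := A) α (e2' k H) (comul2 k H z)
  simpa [N2', Nop_apply, e2', counitH] using h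

lemma convN2 (α β : H ⊗[k] H →ₗ[k] A) :
    conv2 α β ∘ₗ N2' k H = conv2 α (β ∘ₗ N2' k H) := by
  apply LinearMap.ext; intro z
  simp only [conv2, LinearMap.comp_apply]
  have h1 := LinearMap.congr_fun (ND2 (k := k) (H := H)) z
  simp only [LinearMap.comp_apply] at h1
  rw [h1, core7]

lemma convN3 (α β : (H ⊗[k] H) ⊗[k] H →ₗ[k] A) :
    (LinearMap.mul' k A ∘ₗ TensorProduct.map α β ∘ₗ comul3 k H) ∘ₗ N3' k H =
    LinearMap.mul' k A ∘ₗ TensorProduct.map α (β ∘ₗ N3' k H) ∘ₗ comul3 k H := by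
  apply LinearMap.ext; intro z
  simp only [LinearMap.comp_apply]
  have h1 := LinearMap.congr_fun (ND3 (k := k) (H := H)) z
  simp only [LinearMap.comp_apply] at h1
  rw [h1, core7]

lemma hY : ((TensorProduct.assoc k (H ⊗[k] H) (H ⊗[k] H) H).toLinearMap ∘ₗ
      LinearMap.rTensor H (comul2 k H)) ∘ₗ N3' k H =
    LinearMap.lTensor (H ⊗[k] H) (N3' k H) ∘ₗ
      ((TensorProduct.assoc k (H ⊗[k] H) (H ⊗[k] H) H).toLinearMap ∘ₗ
        LinearMap.rTensor H (comul2 k H)) :=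
  NopY (comul2 k H) (comulH k H) (e3' k H) hco2

lemma convNY (α : H ⊗[k] H →ₗ[k] A) (β : (H ⊗[k] H) ⊗[k] H →ₗ[k] A) :
    (LinearMap.mul' k A ∘ₗ TensorProduct.map α β ∘ₗ
        (TensorProduct.assoc k (H ⊗[k] H) (H ⊗[k] H) H).toLinearMap ∘ₗ
        LinearMap.rTensor H (comul2 k H)) ∘ₗ N3' k H =
    LinearMap.mul' k A ∘ₗ TensorProduct.map α (β ∘ₗ N3' k H) ∘ₗ
        (TensorProduct.assoc k (H ⊗[k] H) (H ⊗[k] H) H).toLinearMap ∘ₗ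
        LinearMap.rTensor H (comul2 k H) := by
  apply LinearMap.ext; intro z
  simp only [LinearMap.comp_apply]
  have h1 := LinearMap.congr_fun (hY (k := k) (H := H)) z
  simp only [LinearMap.comp_apply] at h1
  rw [h1, core7]

lemma epsA2 (α : H ⊗[k] H →ₗ[k] A) (z : H ⊗[k] H) :
    epsA (TensorProduct.map α (LinearMap.mul' k H) (comul2 k H z)) = α (N2' k H z) := by
  have h := core6 (A := A) α (LinearMap.mul' k H) (comul2 k H z)
  simpa [epsA, N2', Nop_apply, e2', counitH] using h

lemma epsA3 (α : (H ⊗[k] H) ⊗[k] H →ₗ[k] A) (z : (H ⊗[k] H) ⊗[k] H) :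
    epsA (TensorProduct.map α
      (LinearMap.mul' k H ∘ₗ LinearMap.rTensor H (LinearMap.mul' k H)) (comul3 k H z)) =
      α (N3' k H z) := by
  have h := core6 (A := A) α (m3' k H) (comul3 k H z)
  simpa [epsA, N3', Nop_apply, e3', m3', counitH] using h

lemma tmFactorL (ρ : H ⊗[k] A →ₗ[k] A) (f : H ⊗[k] H →ₗ[k] A) (a : A) :
    tmLhsF ρ f a = TensorProduct.map
      (conv2 f (rhoAt ρ a ∘ₗ LinearMap.mul' k H)) (LinearMap.mul' k H) ∘ₗ comul2 k H := by
  have h1 : tmLhsF ρ f a = (TensorProduct.map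
      (LinearMap.mul' k A ∘ₗ TensorProduct.map f (rhoAt ρ a ∘ₗ LinearMap.mul' k H))
      (LinearMap.mul' k H) ∘ₗ LinearMap.rTensor (H ⊗[k] H) (comul2 k H)) ∘ₗ comul2 k H := rfl
  rw [h1, LinearMap.map_comp_rTensor]
  rfl

lemma tmFactorR (ρ : H ⊗[k] A →ₗ[k] A) (f : H ⊗[k] H →ₗ[k] A) (a : A) :
    tmRhsF ρ f a = TensorProduct.map
      (conv2 (ρ ∘ₗ LinearMap.lTensor H (rhoAt ρ a)) f) (LinearMap.mul' k H) ∘ₗ comul2 k H := by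
  have h1 : tmRhsF ρ f a = (TensorProduct.map
      (LinearMap.mul' k A ∘ₗ TensorProduct.map (ρ ∘ₗ LinearMap.lTensor H (rhoAt ρ a)) f)
      (LinearMap.mul' k H) ∘ₗ LinearMap.rTensor (H ⊗[k] H) (comul2 k H)) ∘ₗ comul2 k H := rfl
  rw [h1, LinearMap.map_comp_rTensor]
  rfl

lemma ccFactorR (ρ : H ⊗[k] A →ₗ[k] A) (f : H ⊗[k] H →ₗ[k] A) :
    ccRhsF ρ f = TensorProduct.map
      (LinearMap.mul' k A ∘ₗ TensorProduct.map
        (ρ ∘ₗ LinearMap.lTensor H f ∘ₗ (TensorProduct.assoc k H H H).toLinearMap)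
        (f ∘ₗ LinearMap.lTensor H (LinearMap.mul' k H) ∘ₗ
          (TensorProduct.assoc k H H H).toLinearMap) ∘ₗ comul3 k H)
      (LinearMap.mul' k H ∘ₗ LinearMap.rTensor H (LinearMap.mul' k H)) ∘ₗ comul3 k H := by
  have h1 : ccRhsF ρ f = (TensorProduct.map
      (LinearMap.mul' k A ∘ₗ TensorProduct.map
        (ρ ∘ₗ LinearMap.lTensor H f ∘ₗ (TensorProduct.assoc k H H H).toLinearMap)
        (f ∘ₗ LinearMap.lTensor H (LinearMap.mul' k H) ∘ₗ
          (TensorProduct.assoc k H H H).toLinearMap))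
      (LinearMap.mul' k H ∘ₗ LinearMap.rTensor H (LinearMap.mul' k H)) ∘ₗ
      LinearMap.rTensor ((H ⊗[k] H) ⊗[k] H) (comul3 k H)) ∘ₗ comul3 k H := rfl
  rw [h1, LinearMap.map_comp_rTensor]
  rfl

lemma ccFactorL (f : H ⊗[k] H →ₗ[k] A) :
    ccLhsF f = TensorProduct.map
      (LinearMap.mul' k A ∘ₗ
        TensorProduct.map f (f ∘ₗ LinearMap.rTensor H (LinearMap.mul' k H)) ∘ₗ
          (TensorProduct.assoc k (H ⊗[k] H) (H ⊗[k] H) H).toLinearMap ∘ₗ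
          LinearMap.rTensor H (comul2 k H))
      (LinearMap.mul' k H ∘ₗ LinearMap.rTensor H (LinearMap.mul' k H)) ∘ₗ comul3 k H := by
  have h1 : ccLhsF f = TensorProduct.map
      (LinearMap.mul' k A ∘ₗ
        TensorProduct.map f (f ∘ₗ LinearMap.rTensor H (LinearMap.mul' k H)) ∘ₗ
          (TensorProduct.assoc k (H ⊗[k] H) (H ⊗[k] H) H).toLinearMap)
      (LinearMap.mul' k H ∘ₗ LinearMap.rTensor H (LinearMap.mul' k H)) ∘ₗ
      ((TensorProduct.tensorTensorTensorComm k
          ((H ⊗[k] H) ⊗[k] (H ⊗[k] H)) (H ⊗[k] H) H H).toLinearMap ∘ₗ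
        TensorProduct.map (comul2three k H) (comulH k H)) := rfl
  rw [h1, ← LD]
  have h2 : TensorProduct.map
      (LinearMap.mul' k A ∘ₗ
        TensorProduct.map f (f ∘ₗ LinearMap.rTensor H (LinearMap.mul' k H)) ∘ₗ
          (TensorProduct.assoc k (H ⊗[k] H) (H ⊗[k] H) H).toLinearMap)
      (LinearMap.mul' k H ∘ₗ LinearMap.rTensor H (LinearMap.mul' k H)) ∘ₗ
      (LinearMap.rTensor ((H ⊗[k] H) ⊗[k] H) (LinearMap.rTensor H (comul2 k H)) ∘ₗ
        comul3 k H) =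
      (TensorProduct.map
      (LinearMap.mul' k A ∘ₗ
        TensorProduct.map f (f ∘ₗ LinearMap.rTensor H (LinearMap.mul' k H)) ∘ₗ
          (TensorProduct.assoc k (H ⊗[k] H) (H ⊗[k] H) H).toLinearMap)
      (LinearMap.mul' k H ∘ₗ LinearMap.rTensor H (LinearMap.mul' k H)) ∘ₗ
      LinearMap.rTensor ((H ⊗[k] H) ⊗[k] H) (LinearMap.rTensor H (comul2 k H))) ∘ₗ
        comul3 k H := rfl
  rw [h2, LinearMap.map_comp_rTensor]
  rfl

end GlueAux


theorem statement_3
    (hWB : IsWeakBialgebra k H)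
    (ρ : H ⊗[k] A →ₗ[k] A) (hρ : IsWeakMeasure ρ)
    (f : H ⊗[k] H →ₗ[k] A) (hf : f = convCounitR f) :
    (IsTwistedModule ρ f ↔ ∀ a : A, tmLhsF ρ f a = tmRhsF ρ f a) ∧
    (IsCocycle ρ f ↔ ccLhsF f = ccRhsF ρ f) := by
  constructor
  · constructor
    · intro ht a
      rw [tmFactorL, tmFactorR, ht a]
    · intro hEq a
      have h0 := hEq a
      rw [tmFactorL, tmFactorR] at h0
      have h1 : conv2 f (rhoAt ρ a ∘ₗ LinearMap.mul' k H) ∘ₗ N2' k H =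
          conv2 (ρ ∘ₗ LinearMap.lTensor H (rhoAt ρ a)) f ∘ₗ N2' k H := by
        apply LinearMap.ext; intro z
        have h2 := LinearMap.congr_fun h0 z
        simp only [LinearMap.comp_apply] at h2
        show (conv2 f (rhoAt ρ a ∘ₗ LinearMap.mul' k H)) (N2' k H z) =
          (conv2 (ρ ∘ₗ LinearMap.lTensor H (rhoAt ρ a)) f) (N2' k H z)
        rw [← epsA2 (conv2 f (rhoAt ρ a ∘ₗ LinearMap.mul' k H)) z,
          ← epsA2 (conv2 (ρ ∘ₗ LinearMap.lTensor H (rhoAt ρ a)) f) z, h2]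
      have hβ : (rhoAt ρ a ∘ₗ LinearMap.mul' k H) ∘ₗ N2' k H =
          rhoAt ρ a ∘ₗ LinearMap.mul' k H := by
        rw [LinearMap.comp_assoc, m2N2 hWB]
      have hfN : f ∘ₗ N2' k H = f := (hf.trans (convCR f)).symm
      calc conv2 f (rhoAt ρ a ∘ₗ LinearMap.mul' k H)
          = conv2 f (rhoAt ρ a ∘ₗ LinearMap.mul' k H) ∘ₗ N2' k H := by
            rw [convN2, hβ]
        _ = conv2 (ρ ∘ₗ LinearMap.lTensor H (rhoAt ρ a)) f ∘ₗ N2' k H := h1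
        _ = conv2 (ρ ∘ₗ LinearMap.lTensor H (rhoAt ρ a)) f := by
            rw [convN2, hfN]
  · constructor
    · intro hc
      have hc' : LinearMap.mul' k A ∘ₗ
          TensorProduct.map f (f ∘ₗ LinearMap.rTensor H (LinearMap.mul' k H)) ∘ₗ
            (TensorProduct.assoc k (H ⊗[k] H) (H ⊗[k] H) H).toLinearMap ∘ₗ
              LinearMap.rTensor H (comul2 k H) =
        LinearMap.mul' k A ∘ₗ
          TensorProduct.map
            (ρ ∘ₗ LinearMap.lTensor H f ∘ₗ (TensorProduct.assoc k H H H).toLinearMap)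
            (f ∘ₗ LinearMap.lTensor H (LinearMap.mul' k H) ∘ₗ
              (TensorProduct.assoc k H H H).toLinearMap) ∘ₗ comul3 k H := hc
      rw [ccFactorL, ccFactorR, hc']
    · intro hEq
      rw [ccFactorL, ccFactorR] at hEq
      have hfN : f ∘ₗ N2' k H = f := (hf.trans (convCR f)).symm
      have h1 : (LinearMap.mul' k A ∘ₗ
          TensorProduct.map f (f ∘ₗ LinearMap.rTensor H (LinearMap.mul' k H)) ∘ₗ
            (TensorProduct.assoc k (H ⊗[k] H) (H ⊗[k] H) H).toLinearMap ∘ₗ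
              LinearMap.rTensor H (comul2 k H)) ∘ₗ N3' k H =
          (LinearMap.mul' k A ∘ₗ
          TensorProduct.map
            (ρ ∘ₗ LinearMap.lTensor H f ∘ₗ (TensorProduct.assoc k H H H).toLinearMap)
            (f ∘ₗ LinearMap.lTensor H (LinearMap.mul' k H) ∘ₗ
              (TensorProduct.assoc k H H H).toLinearMap) ∘ₗ comul3 k H) ∘ₗ N3' k H := by
        apply LinearMap.ext; intro z
        have h2 := LinearMap.congr_fun hEq z
        simp only [LinearMap.comp_apply] at h2
        show (LinearMap.mul' k A ∘ₗ
          TensorProduct.map f (f ∘ₗ LinearMap.rTensor H (LinearMap.mul' k H)) ∘ₗ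
            (TensorProduct.assoc k (H ⊗[k] H) (H ⊗[k] H) H).toLinearMap ∘ₗ
              LinearMap.rTensor H (comul2 k H)) (N3' k H z) =
          (LinearMap.mul' k A ∘ₗ
          TensorProduct.map
            (ρ ∘ₗ LinearMap.lTensor H f ∘ₗ (TensorProduct.assoc k H H H).toLinearMap)
            (f ∘ₗ LinearMap.lTensor H (LinearMap.mul' k H) ∘ₗ
              (TensorProduct.assoc k H H H).toLinearMap) ∘ₗ comul3 k H) (N3' k H z)
        rw [← epsA3 (LinearMap.mul' k A ∘ₗ
          TensorProduct.map f (f ∘ₗ LinearMap.rTensor H (LinearMap.mul' k H)) ∘ₗ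
            (TensorProduct.assoc k (H ⊗[k] H) (H ⊗[k] H) H).toLinearMap ∘ₗ
              LinearMap.rTensor H (comul2 k H)) z,
          ← epsA3 (LinearMap.mul' k A ∘ₗ
          TensorProduct.map
            (ρ ∘ₗ LinearMap.lTensor H f ∘ₗ (TensorProduct.assoc k H H H).toLinearMap)
            (f ∘ₗ LinearMap.lTensor H (LinearMap.mul' k H) ∘ₗ
              (TensorProduct.assoc k H H H).toLinearMap) ∘ₗ comul3 k H) z, h2]
      have hF2 : (f ∘ₗ LinearMap.rTensor H (LinearMap.mul' k H)) ∘ₗ N3' k H =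
          f ∘ₗ LinearMap.rTensor H (LinearMap.mul' k H) := by
        have h : (f ∘ₗ pimap k H) ∘ₗ N3' k H = f ∘ₗ pimap k H := by
          rw [LinearMap.comp_assoc, piN3 hWB, ← LinearMap.comp_assoc, hfN]
        exact h
      have hQ : (f ∘ₗ LinearMap.lTensor H (LinearMap.mul' k H) ∘ₗ
            (TensorProduct.assoc k H H H).toLinearMap) ∘ₗ N3' k H =
          f ∘ₗ LinearMap.lTensor H (LinearMap.mul' k H) ∘ₗ
            (TensorProduct.assoc k H H H).toLinearMap := by
        have h : (f ∘ₗ qmap k H) ∘ₗ N3' k H = f ∘ₗ qmap k H := by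
          rw [LinearMap.comp_assoc, qN3 hWB, ← LinearMap.comp_assoc, hfN]
        exact h
      have hbL : (LinearMap.mul' k A ∘ₗ
          TensorProduct.map f (f ∘ₗ LinearMap.rTensor H (LinearMap.mul' k H)) ∘ₗ
            (TensorProduct.assoc k (H ⊗[k] H) (H ⊗[k] H) H).toLinearMap ∘ₗ
              LinearMap.rTensor H (comul2 k H)) ∘ₗ N3' k H =
          LinearMap.mul' k A ∘ₗ
          TensorProduct.map f (f ∘ₗ LinearMap.rTensor H (LinearMap.mul' k H)) ∘ₗ
            (TensorProduct.assoc k (H ⊗[k] H) (H ⊗[k] H) H).toLinearMap ∘ₗ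
              LinearMap.rTensor H (comul2 k H) := by
        rw [convNY, hF2]
      have hbR : (LinearMap.mul' k A ∘ₗ
          TensorProduct.map
            (ρ ∘ₗ LinearMap.lTensor H f ∘ₗ (TensorProduct.assoc k H H H).toLinearMap)
            (f ∘ₗ LinearMap.lTensor H (LinearMap.mul' k H) ∘ₗ
              (TensorProduct.assoc k H H H).toLinearMap) ∘ₗ comul3 k H) ∘ₗ N3' k H =
          LinearMap.mul' k A ∘ₗ
          TensorProduct.map
            (ρ ∘ₗ LinearMap.lTensor H f ∘ₗ (TensorProduct.assoc k H H H).toLinearMap)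
            (f ∘ₗ LinearMap.lTensor H (LinearMap.mul' k H) ∘ₗ
              (TensorProduct.assoc k H H H).toLinearMap) ∘ₗ comul3 k H := by
        rw [convN3, hQ]
      show LinearMap.mul' k A ∘ₗ
          TensorProduct.map f (f ∘ₗ LinearMap.rTensor H (LinearMap.mul' k H)) ∘ₗ
            (TensorProduct.assoc k (H ⊗[k] H) (H ⊗[k] H) H).toLinearMap ∘ₗ
              LinearMap.rTensor H (comul2 k H) =
        LinearMap.mul' k A ∘ₗ
          TensorProduct.map
            (ρ ∘ₗ LinearMap.lTensor H f ∘ₗ (TensorProduct.assoc k H H H).toLinearMap)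
            (f ∘ₗ LinearMap.lTensor H (LinearMap.mul' k H) ∘ₗ
              (TensorProduct.assoc k H H H).toLinearMap) ∘ₗ comul3 k H
      rw [← hbL, h1, hbR]


end WeakCrossed
end
end
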